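/- Programs Π₁ and Π₂ are strongly equivalent for clingo — i.e., for every program Δ, the programs Π₁ ∪ Δ and Π₂ ∪ Δ have the same gringo answer sets — if and only if τ^cli(Π₁) and τ^cli(Π₂) have the same agg-ht-models over σ(𝒫,𝒮), where 𝒫 and 𝒮 contain all predicate and set symbols occurring in Π₁ ∪ Π₂. -/

import Mathlib

/-! ### Programs with aggregates: syntax -/

/-- Ground program terms: numerals, symbolic constants, `#inf`, `#sup`. -/
inductive PTerm : Type where
  | inf : PTerm
  | num : ℤ → PTerm
  | sym : ℕ → PTerm
  | sup : PTerm
deriving DecidableEq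

/-- The chosen total order on ground program terms: `#inf` least, `#sup` greatest,
numerals ordered as the integers and below all symbolic constants. -/
def PTerm.le : PTerm → PTerm → Prop
  | .inf, _ => True
  | _, .sup => True
  | .sup, _ => False
  | _, .inf => False
  | .num m, .num n => m ≤ n
  | .num _, .sym _ => True
  | .sym _, .num _ => False
  | .sym a, .sym b => a ≤ b

def PTerm.lt (a b : PTerm) : Prop := PTerm.le a b ∧ a ≠ b

/-- Comparison symbols: `=`, `≠`, `<`, `>`, `≤`, `≥`. -/
inductive Cmp : Type where
  | ceq | cneq | clt | cgt | cle | cge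
deriving DecidableEq

def Cmp.holds : Cmp → PTerm → PTerm → Prop
  | .ceq, a, b => a = b
  | .cneq, a, b => a ≠ b
  | .clt, a, b => PTerm.lt a b
  | .cgt, a, b => PTerm.lt b a
  | .cle, a, b => PTerm.le a b
  | .cge, a, b => PTerm.le b a

instance : DecidablePred (Function.uncurry PTerm.le) := by
  rintro ⟨a, b⟩
  cases a <;> cases b <;> simp [Function.uncurry, PTerm.le] <;> infer_instance

instance (a b : PTerm) : Decidable (PTerm.le a b) :=
  inferInstanceAs (Decidable (Function.uncurry PTerm.le (a, b)))

instance (a b : PTerm) : Decidable (PTerm.lt a b) := by unfold PTerm.lt; infer_instance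

instance (c : Cmp) (a b : PTerm) : Decidable (c.holds a b) := by
  cases c <;> simp [Cmp.holds] <;> infer_instance

/-- Program terms: ground terms or program variables (variables are natural
numbers, giving a countably infinite supply; their order is used as the
lexicographic order on variables). -/
inductive PrgTerm : Type where
  | ground : PTerm → PrgTerm
  | var : ℕ → PrgTerm
deriving DecidableEq

/-- An atom `p(t₁,…,tₙ)`. -/
structure Atom : Type where
  pred : ℕ
  args : List PrgTerm
deriving DecidableEq

/-- Atomic formulas: atoms and comparisons. -/
inductive AtomicF : Type where
  | atm : Atom → AtomicF
  | cmp : PrgTerm → Cmp → PrgTerm → AtomicF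
deriving DecidableEq

/-- Zero, one or two occurrences of `not`. -/
inductive Nots : Type where
  | zero | one | two
deriving DecidableEq

/-- A basic literal: an atomic formula preceded by zero, one or two `not`. -/
structure BLit : Type where
  nots : Nots
  af : AtomicF
deriving DecidableEq

/-- An aggregate element `t₁,…,t_k : l₁,…,l_m`. -/
structure AggElem : Type where
  terms : List PrgTerm
  lits : List BLit
deriving DecidableEq

/-- Aggregate operation names. -/
inductive AggOp : Type where
  | count | sum
deriving DecidableEq

/-- An aggregate atom `#op{E} ≺ u`. -/
structure AggAtom : Type where
  op : AggOp
  elem : AggElem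
  rel : Cmp
  guard : PrgTerm
deriving DecidableEq

/-- An aggregate literal: an aggregate atom preceded by zero, one or two `not`. -/
structure AggLit : Type where
  nots : Nots
  agg : AggAtom
deriving DecidableEq

/-- Literals. -/
inductive Lit : Type where
  | basic : BLit → Lit
  | aggr : AggLit → Lit
deriving DecidableEq

/-- A rule `Head :- B₁,…,Bₙ` (`head = none` represents `⊥`, i.e. a constraint). -/
structure Rule : Type where
  head : Option Atom
  body : List Lit
deriving DecidableEq

/-- A program is a set of rules. -/
abbrev Program : Type := Set Rule

/-! ### Variables, global variables, set symbols -/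

def PrgTerm.varsL : PrgTerm → List ℕ
  | .ground _ => []
  | .var v => [v]

def Atom.varsL (a : Atom) : List ℕ :=
  a.args.foldr (fun t acc => t.varsL ++ acc) []

def AtomicF.varsL : AtomicF → List ℕ
  | .atm a => a.varsL
  | .cmp l _ r => l.varsL ++ r.varsL

def BLit.varsL (l : BLit) : List ℕ := l.af.varsL

def AggElem.varsL (e : AggElem) : List ℕ :=
  e.terms.foldr (fun t acc => t.varsL ++ acc) [] ++
  e.lits.foldr (fun l acc => l.varsL ++ acc) []

/-- The variables that are global in a rule: those occurring in a non-aggregate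
literal or in a guard of an aggregate literal. -/
def Rule.globalVarsL (R : Rule) : List ℕ :=
  R.body.foldr (fun l acc =>
    (match l with
      | .basic b => b.varsL
      | .aggr a => a.agg.guard.varsL) ++ acc) []

/-- The lexicographically (i.e. numerically) sorted duplicate-free list of a list
of variables. -/
def sortedL (l : List ℕ) : List ℕ := l.dedup.insertionSort (· ≤ ·)

/-- The sorted list of variables of the rule that are global. -/
def globalVarsSorted (R : Rule) : List ℕ := sortedL R.globalVarsL

/-- For an aggregate element `E` occurring in rule `R`, the lexicographically
ordered list `X` of all variables of `E` that are global in `R`. -/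
def aggX (R : Rule) (E : AggElem) : List ℕ :=
  sortedL (E.varsL.filter (fun v => v ∈ R.globalVarsL))

/-- The lexicographically ordered list `Y` of the variables occurring in `E`
that are not in `X` (the "local" variables). -/
def localsOf (E : AggElem) (X : List ℕ) : List ℕ :=
  sortedL (E.varsL.filter (fun v => v ∉ X))

/-- A set symbol `E/X`. -/
structure SetSymbol : Type where
  elem : AggElem
  gvars : List ℕ
deriving DecidableEq

/-- The set symbols occurring in a program. -/
def ssymsOf (Pi : Program) : Set SetSymbol :=
  { s | ∃ R ∈ Pi, ∃ l : AggLit, Lit.aggr l ∈ R.body ∧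
        s = ⟨l.agg.elem, aggX R l.agg.elem⟩ }

def AtomicF.atomL : AtomicF → List Atom
  | .atm a => [a]
  | .cmp _ _ _ => []

/-- All atoms occurring in a rule (head, basic body literals, and literals inside
aggregate elements). -/
def Rule.atomsL (R : Rule) : List Atom :=
  (match R.head with | some a => [a] | none => []) ++
  R.body.foldr (fun l acc =>
    (match l with
      | .basic b => b.af.atomL
      | .aggr al => al.agg.elem.lits.foldr (fun b acc2 => b.af.atomL ++ acc2) []) ++ acc) []

/-- The predicate symbols (name/arity pairs) occurring in a program. -/
def predsOf (Pi : Program) : Set (ℕ × ℕ) :=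
  { pn | ∃ R ∈ Pi, ∃ a ∈ R.atomsL, pn = (a.pred, a.args.length) }

/-! ### The functions associated with the aggregate names -/

/-- The weight of a tuple of ground terms. -/
def tupleWeight : List PTerm → ℤ
  | (PTerm.num n) :: _ => n
  | _ => 0

open scoped Classical in
/-- `count^`. -/
noncomputable def countHat (Δ : Set (List PTerm)) : PTerm :=
  if h : Δ.Finite then .num h.toFinset.card else .sup

/-- `sum^`: the sum of the weights of the tuples in `Δ` if only finitely many
tuples have non-zero weight, and `0` otherwise. -/
noncomputable def sumHat (Δ : Set (List PTerm)) : PTerm :=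
  .num (∑ᶠ t ∈ Δ, tupleWeight t)

noncomputable def AggOp.hat : AggOp → Set (List PTerm) → PTerm
  | .count => countHat
  | .sum => sumHat

/-! ### Three-sorted signatures and interpretations -/

/-- A three-sorted signature for programs with aggregates: predicate symbols (with
arities), set-valued function symbols, and tuple-forming function symbols.  The
remaining symbols (ground program terms as constants of the general sort, the
comparison predicates, membership `∈`, and `count`/`sum`) are the same in every
such signature and are built into the syntax below. -/
structure ASig : Type 1 where
  PSym : Type
  parity : PSym → ℕ
  SSym : Type
  sarity : SSym → ℕ
  TSym : Type
  tarity : TSym → ℕ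

/-- The universe of the tuple sort: all tuples of elements of the general sort
whose length is the arity of some tuple-forming function. -/
def tupDom (σ : ASig) : Set (List PTerm) :=
  { l | ∃ f : σ.TSym, l.length = σ.tarity f }

mutual
  /-- Ground terms of the general sort (with names of domain elements). -/
  inductive GTm (σ : ASig) : Type where
    | name : PTerm → GTm σ
    | cnt : STm σ → GTm σ
    | sm : STm σ → GTm σ
  /-- Ground terms of the tuple sort. -/
  inductive TTm (σ : ASig) : Type where
    | name : List PTerm → TTm σ
    | tup : (f : σ.TSym) → (Fin (σ.tarity f) → GTm σ) → TTm σ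
  /-- Ground terms of the set sort. -/
  inductive STm (σ : ASig) : Type where
    | name : Set (List PTerm) → STm σ
    | sfn : (f : σ.SSym) → (Fin (σ.sarity f) → GTm σ) → STm σ
end

/-- A standard interpretation of `σ`; the universes of the general and tuple sorts,
the denotations of ground program terms, the comparison predicates, the
tuple-forming functions, `∈`, `count` and `sum` are fixed, so the interpretation is
given by the universe of the set sort together with the denotations of the
predicate symbols and of the set-valued function symbols. -/
structure AInterp (σ : ASig) : Type 1 where
  setDom : Set (Set (List PTerm))
  pr : (p : σ.PSym) → (Fin (σ.parity p) → PTerm) → Prop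
  sfn : (f : σ.SSym) → (Fin (σ.sarity f) → PTerm) → Set (List PTerm)

/-- The remaining conditions for being a standard interpretation: every element of
the set-sort universe is a set of tuples, and the set-valued functions take values
in the set-sort universe. -/
def IsStd {σ : ASig} (I : AInterp σ) : Prop :=
  (∀ s ∈ I.setDom, s ⊆ tupDom σ) ∧ (∀ f a, I.sfn f a ∈ I.setDom)

mutual
  noncomputable def GTm.eval {σ : ASig} (I : AInterp σ) : GTm σ → PTerm
    | .name d => d
    | .cnt s => countHat (s.eval I)
    | .sm s => sumHat (s.eval I)
  noncomputable def TTm.eval {σ : ASig} (I : AInterp σ) : TTm σ → List PTerm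
    | .name d => d
    | .tup _ args => List.ofFn (fun i => (args i).eval I)
  noncomputable def STm.eval {σ : ASig} (I : AInterp σ) : STm σ → Set (List PTerm)
    | .name d => d
    | .sfn f args => I.sfn f (fun i => (args i).eval I)
end

/-- Extended first-order sentences over `σ^I` (quantified bodies are represented
by functions on names of domain elements of the respective sort). -/
inductive AFml (σ : ASig) : Type 1 where
  | patom : (p : σ.PSym) → (Fin (σ.parity p) → GTm σ) → AFml σ
  | cmp : Cmp → GTm σ → GTm σ → AFml σ
  | mem : TTm σ → STm σ → AFml σ
  | teq : TTm σ → TTm σ → AFml σ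
  | seq : STm σ → STm σ → AFml σ
  | fls : AFml σ
  | conj : AFml σ → AFml σ → AFml σ
  | disj : AFml σ → AFml σ → AFml σ
  | impl : AFml σ → AFml σ → AFml σ
  | snot : AFml σ → AFml σ
  | gall : (PTerm → AFml σ) → AFml σ
  | gex : (PTerm → AFml σ) → AFml σ
  | tall : (List PTerm → AFml σ) → AFml σ
  | tex : (List PTerm → AFml σ) → AFml σ
  | sall : (Set (List PTerm) → AFml σ) → AFml σ
  | sex : (Set (List PTerm) → AFml σ) → AFml σ

/-- `¬F` abbreviates `F → ⊥`. -/
def AFml.neg {σ : ASig} (F : AFml σ) : AFml σ := .impl F .fls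

/-- Classical satisfaction (`⌐` is classical negation). -/
def satA {σ : ASig} (I : AInterp σ) : AFml σ → Prop
  | .patom p args => I.pr p (fun i => (args i).eval I)
  | .cmp c l r => c.holds (l.eval I) (r.eval I)
  | .mem t s => t.eval I ∈ s.eval I
  | .teq l r => l.eval I = r.eval I
  | .seq l r => l.eval I = r.eval I
  | .fls => False
  | .conj F G => satA I F ∧ satA I G
  | .disj F G => satA I F ∨ satA I G
  | .impl F G => satA I F → satA I G
  | .snot F => ¬ satA I F
  | .gall F => ∀ d : PTerm, satA I (F d)
  | .gex F => ∃ d : PTerm, satA I (F d)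
  | .tall F => ∀ d ∈ tupDom σ, satA I (F d)
  | .tex F => ∃ d ∈ tupDom σ, satA I (F d)
  | .sall F => ∀ d ∈ I.setDom, satA I (F d)
  | .sex F => ∃ d ∈ I.setDom, satA I (F d)

/-- ht-satisfaction `⟨H,I⟩ ⊨ht F`. -/
def htA {σ : ASig} (H I : AInterp σ) : AFml σ → Prop
  | .patom p args => satA I (.patom p args) ∧ satA H (.patom p args)
  | .cmp c l r => satA I (.cmp c l r) ∧ satA H (.cmp c l r)
  | .mem t s => satA I (.mem t s) ∧ satA H (.mem t s)
  | .teq l r => (l.eval I = r.eval I) ∧ (l.eval H = r.eval H)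
  | .seq l r => (l.eval I = r.eval I) ∧ (l.eval H = r.eval H)
  | .fls => False
  | .conj F G => htA H I F ∧ htA H I G
  | .disj F G => htA H I F ∨ htA H I G
  | .impl F G => (satA I F → satA I G) ∧ (¬ htA H I F ∨ htA H I G)
  | .snot F => ¬ satA I F ∧ ¬ satA H F
  | .gall F => ∀ d : PTerm, htA H I (F d)
  | .gex F => ∃ d : PTerm, htA H I (F d)
  | .tall F => ∀ d ∈ tupDom σ, htA H I (F d)
  | .tex F => ∃ d ∈ tupDom σ, htA H I (F d)
  | .sall F => ∀ d ∈ I.setDom, htA H I (F d)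
  | .sex F => ∃ d ∈ I.setDom, htA H I (F d)

/-- `H ⪯^{IP,IFn} I`: same universes, `p^H ⊆ p^I` for intensional predicates,
`p^H = p^I` for the other predicates, and `f^H = f^I` for non-intensional
(set-valued) function symbols.  (All remaining symbols are fixed.) -/
def preceqA {σ : ASig} (IP : Set σ.PSym) (IFn : Set σ.SSym) (H I : AInterp σ) : Prop :=
  H.setDom = I.setDom ∧
  (∀ p ∈ IP, ∀ a, H.pr p a → I.pr p a) ∧
  (∀ p ∉ IP, ∀ a, H.pr p a ↔ I.pr p a) ∧
  (∀ f ∉ IFn, ∀ a, H.sfn f a = I.sfn f a)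

def satTh {σ : ASig} (I : AInterp σ) (Γ : Set (AFml σ)) : Prop := ∀ F ∈ Γ, satA I F

def htSatTh {σ : ASig} (H I : AInterp σ) (Γ : Set (AFml σ)) : Prop := ∀ F ∈ Γ, htA H I F

/-- The two semantics. -/
inductive Sem : Type where
  | cli | dlv
deriving DecidableEq

/-- The signature `σ(𝒫,𝒮)`: predicate symbols from `𝒫` (name/arity pairs), the
set-valued function symbols `s^cli_{E/X}`, `s^dlv_{E/X}` for `E/X ∈ 𝒮`, and the
tuple-forming functions `tuple_{E/X}`. -/
def sigPS (P : Set (ℕ × ℕ)) (S : Set SetSymbol) : ASig where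
  PSym := ↥P
  parity := fun p => p.val.2
  SSym := Sem × ↥S
  sarity := fun f => f.2.val.gvars.length
  TSym := ↥S
  tarity := fun f => f.val.elem.terms.length

/-! ### The translations `τ^cli` and `τ^dlv` -/

open scoped Classical

/-- Instantiating a program term by an assignment of ground terms to variables. -/
def PrgTerm.toP (env : ℕ → PTerm) : PrgTerm → PTerm
  | .ground t => t
  | .var v => env v

/-- Assign the values `a` to the variables in the list `X`, deferring to `base`
on other variables. -/
noncomputable def assign (X : List ℕ) (a : Fin X.length → PTerm) (base : ℕ → PTerm) :
    ℕ → PTerm :=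
  fun v => if h : v ∈ X then a ⟨X.idxOf v, List.idxOf_lt_length_iff.mpr h⟩ else base v

noncomputable def trAtomA (P : Set (ℕ × ℕ)) (S : Set SetSymbol)
    (env : ℕ → PTerm) (a : Atom) : AFml (sigPS P S) :=
  if h : (a.pred, a.args.length) ∈ P then
    .patom ⟨(a.pred, a.args.length), h⟩ (fun i => .name ((a.args.get i).toP env))
  else .fls

noncomputable def trAFA (P : Set (ℕ × ℕ)) (S : Set SetSymbol)
    (env : ℕ → PTerm) : AtomicF → AFml (sigPS P S)
  | .atm a => trAtomA P S env a
  | .cmp l c r => .cmp c (.name (l.toP env)) (.name (r.toP env))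

/-- Translation of `not`: `¬` for the clingo semantics and `⌐` for the dlv
semantics. -/
def applyNots {σ : ASig} (x : Sem) : Nots → AFml σ → AFml σ
  | .zero, F => F
  | .one, F => match x with | .cli => F.neg | .dlv => .snot F
  | .two, F => match x with | .cli => F.neg.neg | .dlv => .snot (.snot F)

noncomputable def trBLitA (P : Set (ℕ × ℕ)) (S : Set SetSymbol) (x : Sem)
    (env : ℕ → PTerm) (l : BLit) : AFml (sigPS P S) :=
  applyNots x l.nots (trAFA P S env l.af)

/-- Translation of an aggregate atom `#op{E} ≺ u` occurring with global variable
list `X`: the comparison `op(s^x_{E/X}(X)) ≺ u`. -/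
noncomputable def trAggAtomA (P : Set (ℕ × ℕ)) (S : Set SetSymbol) (x : Sem)
    (X : List ℕ) (env : ℕ → PTerm) (A : AggAtom) : AFml (sigPS P S) :=
  if h : (⟨A.elem, X⟩ : SetSymbol) ∈ S then
    .cmp A.rel
      ((match A.op with
        | .count => GTm.cnt
        | .sum => GTm.sm)
        (STm.sfn ((x, ⟨⟨A.elem, X⟩, h⟩) : (sigPS P S).SSym)
          (fun i => .name (env (X.get i)))))
      (.name (A.guard.toP env))
  else .fls

noncomputable def trLitA (P : Set (ℕ × ℕ)) (S : Set SetSymbol) (x : Sem)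
    (R : Rule) (env : ℕ → PTerm) : Lit → AFml (sigPS P S)
  | .basic l => trBLitA P S x env l
  | .aggr l => applyNots x l.nots (trAggAtomA P S x (aggX R l.agg.elem) env l.agg)

/-- Conjunction of a list of formulas (`⊤ = ¬⊥` for the empty list). -/
def conjL {σ : ASig} : List (AFml σ) → AFml σ
  | [] => AFml.fls.neg
  | [F] => F
  | F :: G :: rest => .conj F (conjL (G :: rest))

noncomputable def trMatrix (P : Set (ℕ × ℕ)) (S : Set SetSymbol) (x : Sem)
    (R : Rule) (env : ℕ → PTerm) : AFml (sigPS P S) :=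
  .impl (conjL (R.body.map (trLitA P S x R env)))
        (match R.head with | some a => trAtomA P S env a | none => .fls)

/-- Universal closure over a list of (general-sort) variables. -/
noncomputable def closeG {σ : ASig} : List ℕ → ((ℕ → PTerm) → AFml σ) → (ℕ → PTerm) → AFml σ
  | [], k, env => k env
  | v :: vs, k, env => .gall (fun d => closeG vs k (Function.update env v d))

/-- `τ^x R`: the universal closure, over the global variables of `R`, of
`τ^x_Z B₁ ∧ … ∧ τ^x_Z Bₙ → τ^x_Z Head`. -/
noncomputable def trRuleA (P : Set (ℕ × ℕ)) (S : Set SetSymbol) (x : Sem)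
    (R : Rule) : AFml (sigPS P S) :=
  closeG (globalVarsSorted R) (trMatrix P S x R) (fun _ => .inf)

/-- `τ^x Pi`: the theory containing `τ^x R` for each rule `R` of `Pi`. -/
def trProgA (P : Set (ℕ × ℕ)) (S : Set SetSymbol) (x : Sem) (Pi : Program) :
    Set (AFml (sigPS P S)) :=
  { F | ∃ R ∈ Pi, F = trRuleA P S x R }

/-! ### agg-interpretations and agg-ht-interpretations -/

/-- The assignment sending the global variables `X` to `a`, the local variables
`Y` to `y`, and everything else to a fixed ground term. -/
noncomputable def envXY (X : List ℕ) (a : Fin X.length → PTerm)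
    (Y : List ℕ) (y : Fin Y.length → PTerm) : ℕ → PTerm :=
  assign X a (assign Y y (fun _ => .inf))

/-- The set of tuples `⟨(t₁)^{XY}_{xy},…,(t_k)^{XY}_{xy}⟩` (over instantiations `y`
of the local variables of `E`) such that `I` satisfies
`τ^x(l₁)^{XY}_{xy} ∧ … ∧ τ^x(l_m)^{XY}_{xy}`. -/
def aggSetI (P : Set (ℕ × ℕ)) (S : Set SetSymbol) (x : Sem)
    (I : AInterp (sigPS P S)) (ss : SetSymbol) (a : Fin ss.gvars.length → PTerm) :
    Set (List PTerm) :=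
  { t | ∃ y : Fin (localsOf ss.elem ss.gvars).length → PTerm,
      t = ss.elem.terms.map (PrgTerm.toP (envXY ss.gvars a (localsOf ss.elem ss.gvars) y)) ∧
      ∀ l ∈ ss.elem.lits,
        satA I (trBLitA P S x (envXY ss.gvars a (localsOf ss.elem ss.gvars) y) l) }

/-- The set of tuples `⟨(t₁)^{XY}_{xy},…,(t_k)^{XY}_{xy}⟩` such that `⟨H,I⟩`
ht-satisfies `τ^cli(l₁)^{XY}_{xy} ∧ … ∧ τ^cli(l_m)^{XY}_{xy}`. -/
def aggSetHT (P : Set (ℕ × ℕ)) (S : Set SetSymbol)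
    (H I : AInterp (sigPS P S)) (ss : SetSymbol) (a : Fin ss.gvars.length → PTerm) :
    Set (List PTerm) :=
  { t | ∃ y : Fin (localsOf ss.elem ss.gvars).length → PTerm,
      t = ss.elem.terms.map (PrgTerm.toP (envXY ss.gvars a (localsOf ss.elem ss.gvars) y)) ∧
      ∀ l ∈ ss.elem.lits,
        htA H I (trBLitA P S Sem.cli (envXY ss.gvars a (localsOf ss.elem ss.gvars) y) l) }

/-- An agg-interpretation: a standard interpretation interpreting each
`s^x_{E/X}(𝐱)` as prescribed. -/
def IsAggInterp (P : Set (ℕ × ℕ)) (S : Set SetSymbol) (I : AInterp (sigPS P S)) : Prop :=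
  IsStd I ∧
  ∀ (x : Sem) (ss : ↥S) (a : Fin ss.val.gvars.length → PTerm),
    I.sfn ((x, ss) : (sigPS P S).SSym) a = aggSetI P S x I ss.val a

/-- An agg-ht-interpretation `⟨H,I⟩`: a standard ht-interpretation such that `I` is
an agg-interpretation, `s^cli_{E/X}(𝐱)^H` is the set of tuples whose
`τ^cli`-translated literals are ht-satisfied by `⟨H,I⟩`, and `s^dlv_{E/X}(𝐱)^H` is
the set of tuples whose `τ^dlv`-translated literals are satisfied by `H`. -/
def IsAggHT (P : Set (ℕ × ℕ)) (S : Set SetSymbol) (H I : AInterp (sigPS P S)) : Prop :=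
  preceqA Set.univ Set.univ H I ∧ IsStd H ∧ IsAggInterp P S I ∧
  (∀ (ss : ↥S) (a : Fin ss.val.gvars.length → PTerm),
    H.sfn ((Sem.cli, ss) : (sigPS P S).SSym) a = aggSetHT P S H I ss.val a) ∧
  (∀ (ss : ↥S) (a : Fin ss.val.gvars.length → PTerm),
    H.sfn ((Sem.dlv, ss) : (sigPS P S).SSym) a = aggSetI P S Sem.dlv H ss.val a)

/-- An agg-stable model of a theory `Γ`: an agg-model `I` of `Γ` such that there is
no agg-ht-interpretation `⟨H,I⟩` with `H ≺ I` satisfying `Γ`. -/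
def IsAggStable (P : Set (ℕ × ℕ)) (S : Set SetSymbol)
    (Γ : Set (AFml (sigPS P S))) (I : AInterp (sigPS P S)) : Prop :=
  IsAggInterp P S I ∧ satTh I Γ ∧
  ¬ ∃ H : AInterp (sigPS P S), IsAggHT P S H I ∧ H ≠ I ∧ htSatTh H I Γ

/-! ### Infinitary propositional formulas and the Abstract Gringo translation -/

/-- Ground atoms of the propositional signature (predicate name together with
argument tuple; comparisons are not among them). -/
abbrev GAtom : Type := ℕ × List PTerm

/-- Infinitary propositional formulas: ground atoms, (set-indexed) infinitary
conjunctions and disjunctions, and implication (`⊥ = ∅^∨`, `¬F = F → ⊥`). -/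
inductive IF : Type 1 where
  | atom : GAtom → IF
  | conj : (ι : Type) → (ι → IF) → IF
  | disj : (ι : Type) → (ι → IF) → IF
  | impl : IF → IF → IF

def IF.top : IF := .conj PEmpty (fun x => x.elim)
def IF.bot : IF := .disj PEmpty (fun x => x.elim)
def IF.neg (F : IF) : IF := .impl F .bot

/-- Satisfaction by a propositional interpretation (a set of ground atoms). -/
def psat (A : Set GAtom) : IF → Prop
  | .atom a => a ∈ A
  | .conj _ f => ∀ i, psat A (f i)
  | .disj _ f => ∃ i, psat A (f i)
  | .impl F G => psat A F → psat A G

noncomputable def trAtomIF (env : ℕ → PTerm) (a : Atom) : IF :=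
  .atom (a.pred, a.args.map (PrgTerm.toP env))

noncomputable def trAFIF (env : ℕ → PTerm) : AtomicF → IF
  | .atm a => trAtomIF env a
  | .cmp l c r => if c.holds (l.toP env) (r.toP env) then .top else .bot

def notsIF : Nots → IF → IF
  | .zero, F => F
  | .one, F => F.neg
  | .two, F => F.neg.neg

noncomputable def trBLitIF (env : ℕ → PTerm) (l : BLit) : IF :=
  notsIF l.nots (trAFIF env l.af)

/-- The conjunction of the (instantiated) literals of an aggregate element. -/
noncomputable def litsConjIF (E : AggElem) (env : ℕ → PTerm) : IF :=
  .conj (Fin E.lits.length) (fun i => trBLitIF env (E.lits.get i))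

/-- The tuple of (instantiated) terms of an aggregate element. -/
noncomputable def tupleOf (E : AggElem) (env : ℕ → PTerm) : List PTerm :=
  E.terms.map (PrgTerm.toP env)

/-- `Δ` justifies the (instantiated) aggregate atom `#op{E} ≺ u`. -/
noncomputable def justifies (op : AggOp) (rel : Cmp) (guard : PTerm)
    (E : AggElem) (Y : List ℕ) (env : ℕ → PTerm)
    (Δ : Set (Fin Y.length → PTerm)) : Prop :=
  rel.holds (op.hat { t | ∃ y ∈ Δ, t = tupleOf E (assign Y y env) }) guard

/-- The Abstract Gringo translation of an instantiated aggregate atom: the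
infinitary conjunction, over all sets `Δ` of instantiations of the local variables
that do not justify the aggregate atom, of the implication from the literals over
`Δ` to the disjunction of the literals over the complement of `Δ`. -/
noncomputable def trAggAtomIF (R : Rule) (env : ℕ → PTerm) (A : AggAtom) : IF :=
  .conj {Δ : Set (Fin (localsOf A.elem (aggX R A.elem)).length → PTerm) //
          ¬ justifies A.op A.rel (A.guard.toP env) A.elem (localsOf A.elem (aggX R A.elem)) env Δ}
    (fun Δ => .impl
      (.conj {y // y ∈ Δ.val}
        (fun y => litsConjIF A.elem (assign (localsOf A.elem (aggX R A.elem)) y.val env)))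
      (.disj {y // y ∉ Δ.val}
        (fun y => litsConjIF A.elem (assign (localsOf A.elem (aggX R A.elem)) y.val env))))

noncomputable def trLitIF (R : Rule) (env : ℕ → PTerm) : Lit → IF
  | .basic l => trBLitIF env l
  | .aggr l => notsIF l.nots (trAggAtomIF R env l.agg)

/-- `τ R`: the infinitary conjunction over all instantiations of the global
variables of `R` of the implications `τB₁ ∧ … ∧ τBₙ → τHead`. -/
noncomputable def trRuleIF (R : Rule) : IF :=
  .conj (Fin (globalVarsSorted R).length → PTerm) (fun z =>
    .impl (.conj (Fin R.body.length)
            (fun i => trLitIF R (assign (globalVarsSorted R) z (fun _ => .inf)) (R.body.get i)))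
          (match R.head with
            | some a => trAtomIF (assign (globalVarsSorted R) z (fun _ => .inf)) a
            | none => .bot))

/-- `τ Pi`. -/
noncomputable def trProgIF (Pi : Program) : IF :=
  .conj ↥Pi (fun R => trRuleIF R.val)

open scoped Classical in
/-- The reduct `F^A`: every maximal subformula not satisfied by `A` is replaced
by `⊥`. -/
noncomputable def reduct (A : Set GAtom) : IF → IF
  | .atom a => if a ∈ A then .atom a else .bot
  | .conj ι f => if psat A (.conj ι f) then .conj ι (fun i => reduct A (f i)) else .bot
  | .disj ι f => if psat A (.disj ι f) then .disj ι (fun i => reduct A (f i)) else .bot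
  | .impl F G => if psat A (.impl F G) then .impl (reduct A F) (reduct A G) else .bot

open scoped Classical in
/-- The FLP-reduct, applied conjunct-wise through conjunctions: an implication is
kept if its antecedent is satisfied by `A` and replaced by `⊤` otherwise. -/
noncomputable def flp (A : Set GAtom) : IF → IF
  | .impl F G => if psat A F then .impl F G else .top
  | .conj ι f => .conj ι (fun i => flp A (f i))
  | .atom a => .atom a
  | .disj ι f => .disj ι f

/-- `A` is a `⊆`-minimal model of `F`. -/
def IsMinModel (A : Set GAtom) (F : IF) : Prop :=
  psat A F ∧ ∀ B : Set GAtom, B ⊂ A → ¬ psat B F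

/-- `A` is a gringo answer set of `Pi`: a `⊆`-minimal model of `(τ Pi)^A`. -/
noncomputable def gringoAS (Pi : Program) (A : Set GAtom) : Prop :=
  IsMinModel A (reduct A (trProgIF Pi))

/-- `A` is a dlv answer set of `Pi`: a `⊆`-minimal model of `FLP(τ Pi, A)`. -/
noncomputable def dlvAS (Pi : Program) (A : Set GAtom) : Prop :=
  IsMinModel A (flp A (trProgIF Pi))

/-- `𝒜_I`: the ground atoms satisfied by `I` whose predicate symbol is not a
comparison. -/
def AIof (P : Set (ℕ × ℕ)) (S : Set SetSymbol) (I : AInterp (sigPS P S)) : Set GAtom :=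
  { a | ∃ h : (a.1, a.2.length) ∈ P,
      I.pr (⟨(a.1, a.2.length), h⟩ : (sigPS P S).PSym) (fun i => a.2.get i) }

/-! ### Auxiliary lemmas for the proof of Statement 14 -/

section IFLems

lemma psat_reduct_imp (X A : Set GAtom) (F : IF) (h : psat X (reduct A F)) : psat A F := by
  cases F <;> simp only [reduct] at h <;> split at h <;>
    first | assumption | exact absurd h (by simp [psat, IF.bot])

lemma red_conj' (X A : Set GAtom) (ι : Type) (f : ι → IF) :
    psat X (reduct A (.conj ι f)) ↔ ∀ i, psat X (reduct A (f i)) := by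
  rw [reduct]
  split
  · simp [psat]
  · constructor
    · intro h; exact absurd h (by simp [psat, IF.bot])
    · intro h
      exact absurd (fun i => psat_reduct_imp X A (f i) (h i)) (by assumption)

lemma red_disj' (X A : Set GAtom) (ι : Type) (f : ι → IF) :
    psat X (reduct A (.disj ι f)) ↔ ∃ i, psat X (reduct A (f i)) := by
  rw [reduct]
  split
  · simp [psat]
  · constructor
    · intro h; exact absurd h (by simp [psat, IF.bot])
    · rintro ⟨i, hi⟩
      exact absurd (show psat A (.disj ι f) from ⟨i, psat_reduct_imp X A (f i) hi⟩)
        (by assumption)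

lemma red_impl (X A : Set GAtom) (F G : IF) :
    psat X (reduct A (.impl F G)) ↔
      psat A (.impl F G) ∧ (psat X (reduct A F) → psat X (reduct A G)) := by
  rw [reduct]
  split
  · simp_all [psat]
  · simp_all [psat, IF.bot]

lemma red_atom (X A : Set GAtom) (a : GAtom) :
    psat X (reduct A (.atom a)) ↔ a ∈ A ∧ a ∈ X := by
  rw [reduct]; split <;> simp_all [psat, IF.bot]

lemma psat_reduct_self (A : Set GAtom) (F : IF) : psat A (reduct A F) ↔ psat A F := by
  constructor
  · exact psat_reduct_imp A A F
  · intro h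
    induction F with
    | atom a =>
        have ha : a ∈ A := h
        simp [reduct, ha, psat]
    | conj ι f ih =>
        rw [red_conj']
        intro i
        exact ih i (by simpa [psat] using h i)
    | disj ι f ih =>
        rw [red_disj']
        obtain ⟨i, hi⟩ := (by simpa [psat] using h : ∃ i, psat A (f i))
        exact ⟨i, ih i hi⟩
    | impl F G ihF ihG =>
        rw [red_impl]
        refine ⟨h, fun hF => ihG (h (psat_reduct_imp A A F hF))⟩

lemma psat_inter (X A : Set GAtom) (F : IF) :
    psat X (reduct A F) ↔ psat (X ∩ A) (reduct A F) := by
  induction F with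
  | atom a =>
      rw [red_atom, red_atom]
      constructor <;> rintro ⟨hA, hX⟩ <;> exact ⟨hA, by simp_all⟩
  | conj ι f ih => rw [red_conj', red_conj']; exact forall_congr' fun i => ih i
  | disj ι f ih => rw [red_disj', red_disj']; exact exists_congr fun i => ih i
  | impl F G ihF ihG => rw [red_impl, red_impl, ihF, ihG]

/-- All ground atoms occurring in an infinitary formula belong to `PA`. -/
def IFover (PA : Set GAtom) : IF → Prop
  | .atom a => a ∈ PA
  | .conj _ f => ∀ i, IFover PA (f i)
  | .disj _ f => ∀ i, IFover PA (f i)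
  | .impl F G => IFover PA F ∧ IFover PA G

lemma psat_PAcongr {PA X X' : Set GAtom} (hX : ∀ g ∈ PA, g ∈ X ↔ g ∈ X') :
    ∀ F : IF, IFover PA F → (psat X F ↔ psat X' F) := by
  intro F
  induction F with
  | atom a => intro h; exact hX a h
  | conj ι f ih => intro h; exact forall_congr' fun i => ih i (h i)
  | disj ι f ih => intro h; exact exists_congr fun i => ih i (h i)
  | impl F G ihF ihG => intro h; rw [psat, psat, ihF h.1, ihG h.2]

lemma IFover_reduct {PA A : Set GAtom} :
    ∀ F : IF, IFover PA F → IFover PA (reduct A F) := by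
  intro F
  induction F with
  | atom a =>
      intro h; rw [reduct]; split
      · exact h
      · simp [IFover, IF.bot]
  | conj ι f ih =>
      intro h; rw [reduct]; split
      · exact fun i => ih i (h i)
      · simp [IFover, IF.bot]
  | disj ι f ih =>
      intro h; rw [reduct]; split
      · exact fun i => ih i (h i)
      · simp [IFover, IF.bot]
  | impl F G ihF ihG =>
      intro h; rw [reduct]; split
      · exact ⟨ihF h.1, ihG h.2⟩
      · simp [IFover, IF.bot]

lemma reduct_PAcongr {PA A A' : Set GAtom} (hA : ∀ g ∈ PA, g ∈ A ↔ g ∈ A') :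
    ∀ F : IF, IFover PA F → reduct A F = reduct A' F := by
  intro F
  induction F with
  | atom a =>
      intro h
      rw [reduct, reduct, if_congr (hA a h) rfl rfl]
  | conj ι f ih =>
      intro h
      rw [reduct, reduct,
        if_congr (psat_PAcongr hA _ (by exact h)) (by rw [funext fun i => ih i (h i)]) rfl]
  | disj ι f ih =>
      intro h
      rw [reduct, reduct,
        if_congr (psat_PAcongr hA _ (by exact h)) (by rw [funext fun i => ih i (h i)]) rfl]
  | impl F G ihF ihG =>
      intro h
      rw [reduct, reduct,
        if_congr (psat_PAcongr hA _ (by exact h)) (by rw [ihF h.1, ihG h.2]) rfl]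

end IFLems

section AFmlLems

variable {σ : ASig}

lemma htA_satA {H I : AInterp σ} : ∀ F : AFml σ, htA H I F → satA I F := by
  intro F
  induction F with
  | patom p args => exact fun h => h.1
  | cmp c l r => exact fun h => h.1
  | mem t s => exact fun h => h.1
  | teq l r => exact fun h => h.1
  | seq l r => exact fun h => h.1
  | fls => exact fun h => h.elim
  | conj F G ihF ihG => exact fun h => ⟨ihF h.1, ihG h.2⟩
  | disj F G ihF ihG => exact fun h => h.elim (fun h => Or.inl (ihF h)) (fun h => Or.inr (ihG h))
  | impl F G ihF ihG => exact fun h => h.1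
  | snot F ih => exact fun h => h.1
  | gall F ih => exact fun h d => ih d (h d)
  | gex F ih => exact fun h => h.elim fun d hd => ⟨d, ih d hd⟩
  | tall F ih => exact fun h d hd => ih d (h d hd)
  | tex F ih => exact fun h => h.elim fun d hd => ⟨d, hd.elim fun h1 h2 => ⟨h1, ih d h2⟩⟩
  | sall F ih => exact fun h d hd => ih d (h d hd)
  | sex F ih => exact fun h => h.elim fun d hd => ⟨d, hd.elim fun h1 h2 => ⟨h1, ih d h2⟩⟩

lemma htA_refl {I : AInterp σ} : ∀ F : AFml σ, htA I I F ↔ satA I F := by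
  intro F
  induction F with
  | patom p args => simp [htA]
  | cmp c l r => simp [htA]
  | mem t s => simp [htA]
  | teq l r => simp [htA, satA]
  | seq l r => simp [htA, satA]
  | fls => simp [htA, satA]
  | conj F G ihF ihG => simp [htA, satA, ihF, ihG]
  | disj F G ihF ihG => simp [htA, satA, ihF, ihG]
  | impl F G ihF ihG =>
      simp only [htA, satA, ihF, ihG]
      tauto
  | snot F ih => simp [htA, satA]
  | gall F ih => simp [htA, satA, ih]
  | gex F ih => simp [htA, satA, ih]
  | tall F ih => simp only [htA, satA]; exact forall_congr' fun d => forall_congr' fun _ => ih d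
  | tex F ih =>
      simp only [htA, satA]
      exact exists_congr fun d => and_congr_right fun _ => ih d
  | sall F ih => simp only [htA, satA]; exact forall_congr' fun d => forall_congr' fun _ => ih d
  | sex F ih =>
      simp only [htA, satA]
      exact exists_congr fun d => and_congr_right fun _ => ih d

lemma htA_neg {H I : AInterp σ} (F : AFml σ) : htA H I F.neg ↔ ¬ satA I F := by
  simp only [AFml.neg, htA, satA]
  constructor
  · intro h; exact h.1
  · intro h
    exact ⟨fun hF => absurd hF h, Or.inl fun hF => h (htA_satA F hF)⟩

lemma satA_neg {I : AInterp σ} (F : AFml σ) : satA I F.neg ↔ ¬ satA I F := by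
  simp [AFml.neg, satA]

lemma satA_conjL {I : AInterp σ} : ∀ L : List (AFml σ), satA I (conjL L) ↔ ∀ F ∈ L, satA I F := by
  intro L
  induction L with
  | nil => simp [conjL, satA, AFml.neg]
  | cons F L ih =>
      cases L with
      | nil => simp [conjL]
      | cons G L' => rw [conjL]; simp only [satA, ih]; simp
 
lemma htA_conjL {H I : AInterp σ} : ∀ L : List (AFml σ), htA H I (conjL L) ↔ ∀ F ∈ L, htA H I F := by
  intro L
  induction L with
  | nil => simp [conjL, AFml.neg, htA, satA]
  | cons F L ih =>
      cases L with
      | nil => simp [conjL]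
      | cons G L' => rw [conjL]; simp only [htA, ih]; simp

end AFmlLems

section ListEnv

/-- Override `base` by `f` on the variables in `vs`. -/
noncomputable def override (vs : List ℕ) (f base : ℕ → PTerm) : ℕ → PTerm :=
  fun x => if x ∈ vs then f x else base x

lemma mem_sortedL {l : List ℕ} {x : ℕ} : x ∈ sortedL l ↔ x ∈ l := by
  rw [sortedL, List.mem_insertionSort, List.mem_dedup]

lemma nodup_sortedL (l : List ℕ) : (sortedL l).Nodup := by
  rw [sortedL]
  exact ((List.perm_insertionSort _ _).nodup_iff).mpr l.nodup_dedup

lemma closeG_htA {σ : ASig} {H I : AInterp σ} :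
    ∀ (vs : List ℕ), vs.Nodup → ∀ (k : (ℕ → PTerm) → AFml σ) (env : ℕ → PTerm),
    (htA H I (closeG vs k env) ↔ ∀ f, htA H I (k (override vs f env))) := by
  intro vs
  induction vs with
  | nil =>
      intro _ k env
      have : override [] (fun _ => PTerm.inf) env = env := by
        funext x; simp [override]
      constructor
      · intro h f
        have : override [] f env = env := by funext x; simp [override]
        rw [this]; exact h
      · intro h
        have h2 := h (fun _ => PTerm.inf)
        rwa [this] at h2
  | cons v vs ih =>
      intro hnd k env
      have hv : v ∉ vs := (List.nodup_cons.mp hnd).1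
      have hnd' : vs.Nodup := (List.nodup_cons.mp hnd).2
      show (∀ d, htA H I (closeG vs k (Function.update env v d))) ↔ _
      constructor
      · intro h f
        have h2 := (ih hnd' k (Function.update env v (f v))).mp (h (f v)) f
        have : override vs f (Function.update env v (f v)) = override (v :: vs) f env := by
          funext x
          by_cases hx : x ∈ vs
          · simp [override, hx]
          · by_cases hxv : x = v
            · subst hxv; simp [override, hx, Function.update]
            · simp [override, hx, hxv, Function.update, List.mem_cons]
        rwa [this] at h2
      · intro h d
        rw [ih hnd' k (Function.update env v d)]
        intro f
        have h2 := h (Function.update f v d)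
        have : override (v :: vs) (Function.update f v d) env
            = override vs f (Function.update env v d) := by
          funext x
          by_cases hx : x ∈ vs
          · have hxv : x ≠ v := fun e => hv (e ▸ hx)
            simp [override, hx, hxv, Function.update, List.mem_cons]
          · by_cases hxv : x = v
            · subst hxv; simp [override, hx, Function.update]
            · simp [override, hx, hxv, Function.update, List.mem_cons]
        rwa [this] at h2

lemma assign_eq_override (X : List ℕ) (z : Fin X.length → PTerm) (base : ℕ → PTerm) :
    assign X z base = override X (assign X z base) base := by
  funext x
  by_cases hx : x ∈ X <;> simp [override, assign, hx]

lemma override_eq_assign (X : List ℕ) (f base : ℕ → PTerm) :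
    override X f base = assign X (fun i => f (X.get i)) base := by
  funext x
  by_cases hx : x ∈ X
  · have hlt : X.idxOf x < X.length := List.idxOf_lt_length_iff.mpr hx
    simp only [override, assign, hx, if_pos, dif_pos]
    congr 1
    exact (List.idxOf_get hlt).symm ▸ rfl
  · simp [override, assign, hx]

end ListEnv

lemma pr_transport {σ : ASig} (I : AInterp σ) {p q : σ.PSym} (e : p = q)
    (a : Fin (σ.parity p) → PTerm) (h : I.pr p a) :
    I.pr q (fun i => a (Fin.cast (congrArg σ.parity e).symm i)) := by
  subst e; exact h

lemma pr_map (P : Set (ℕ × ℕ)) (S : Set SetSymbol) (I : AInterp (sigPS P S))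
    (p : ℕ) (l : List PrgTerm) (env : ℕ → PTerm) (h : (p, l.length) ∈ P) :
    (∃ h' : (p, (l.map (PrgTerm.toP env)).length) ∈ P,
      I.pr ⟨(p, (l.map (PrgTerm.toP env)).length), h'⟩ (fun i => (l.map (PrgTerm.toP env)).get i))
    ↔ I.pr ⟨(p, l.length), h⟩ (fun i => (l.get i).toP env) := by
  simp only [List.get_eq_getElem, List.getElem_map, sigPS]
  constructor
  · rintro ⟨h', hh⟩
    have e : (⟨(p, (l.map (PrgTerm.toP env)).length), h'⟩ : (sigPS P S).PSym)
        = ⟨(p, l.length), h⟩ := Subtype.ext (by simp)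
    exact pr_transport I e _ hh
  · intro hh
    have h' : (p, (l.map (PrgTerm.toP env)).length) ∈ P := by simpa using h
    have e : (⟨(p, l.length), h⟩ : (sigPS P S).PSym)
        = ⟨(p, (l.map (PrgTerm.toP env)).length), h'⟩ := Subtype.ext (by simp)
    exact ⟨h', pr_transport I e _ hh⟩

lemma pr_iff_mem_AIof (P : Set (ℕ × ℕ)) (S : Set SetSymbol) (I : AInterp (sigPS P S))
    (p : (sigPS P S).PSym) (a : Fin ((sigPS P S).parity p) → PTerm) :
    I.pr p a ↔ ((p.val.1, List.ofFn a) : GAtom) ∈ AIof P S I := by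
  show _ ↔ ∃ h : (p.val.1, (List.ofFn a).length) ∈ P, I.pr ⟨(p.val.1, (List.ofFn a).length), h⟩
    (fun i => (List.ofFn a).get i)
  constructor
  · intro hh
    have hl : (List.ofFn a).length = p.val.2 := List.length_ofFn
    have h' : (p.val.1, (List.ofFn a).length) ∈ P := by
      rw [hl, Prod.mk.eta]; exact p.property
    have e : p = (⟨(p.val.1, (List.ofFn a).length), h'⟩ : (sigPS P S).PSym) := by
      apply Subtype.ext
      exact Prod.ext rfl List.length_ofFn.symm
    exact ⟨h', by
      have := pr_transport I e a hh
      convert this using 2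
      exact List.get_ofFn a _⟩
  · rintro ⟨h', hh⟩
    have e : (⟨(p.val.1, (List.ofFn a).length), h'⟩ : (sigPS P S).PSym) = p := by
      apply Subtype.ext
      exact Prod.ext rfl List.length_ofFn
    have := pr_transport I e _ hh
    convert this using 2
    exact (List.get_ofFn a (Fin.cast List.length_ofFn.symm _)).symm

section TransLems

variable {P : Set (ℕ × ℕ)} {S : Set SetSymbol}

@[simp] lemma psat_top (X : Set GAtom) : psat X IF.top := by
  intro i; exact i.elim

@[simp] lemma psat_bot (X : Set GAtom) : ¬ psat X IF.bot := by
  rintro ⟨i, _⟩; exact i.elim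

lemma psat_negIF (X : Set GAtom) (F : IF) : psat X F.neg ↔ ¬ psat X F := by
  constructor
  · intro h hF; exact psat_bot X (h hF)
  · intro h hF; exact absurd hF h

lemma red_neg (X A : Set GAtom) (F : IF) : psat X (reduct A F.neg) ↔ ¬ psat A F := by
  rw [IF.neg, red_impl]
  constructor
  · intro h; exact (psat_negIF A F).mp h.1
  · intro h
    refine ⟨(psat_negIF A F).mpr h, fun hF => absurd (psat_reduct_imp X A F hF) h⟩

lemma red_top (X A : Set GAtom) : psat X (reduct A IF.top) := by
  rw [IF.top, red_conj']; intro i; exact i.elim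

lemma red_bot (X A : Set GAtom) : ¬ psat X (reduct A IF.bot) := by
  rw [IF.bot, red_disj']; rintro ⟨i, _⟩; exact i.elim

lemma satA_patomAux (I : AInterp (sigPS P S)) (env : ℕ → PTerm) (a : Atom)
    (h : (a.pred, a.args.length) ∈ P) :
    satA I (.patom (⟨(a.pred, a.args.length), h⟩ : (sigPS P S).PSym)
        (fun i => .name ((a.args.get i).toP env))) ↔
      ((a.pred, a.args.map (PrgTerm.toP env)) : GAtom) ∈ AIof P S I := by
  simp only [satA, GTm.eval]
  rw [← pr_map P S I a.pred a.args env h]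
  rfl

lemma satA_trAtomA (I : AInterp (sigPS P S)) (env : ℕ → PTerm) (a : Atom) :
    satA I (trAtomA P S env a) ↔
      ((a.pred, a.args.map (PrgTerm.toP env)) : GAtom) ∈ AIof P S I := by
  rw [trAtomA]
  split
  · next h => exact satA_patomAux I env a h
  · next h =>
      simp only [satA]
      constructor
      · exact fun hf => hf.elim
      · rintro ⟨h', _⟩
        exact absurd (by simpa using h') h

lemma htA_trAtomA (H I : AInterp (sigPS P S)) (env : ℕ → PTerm) (a : Atom) :
    htA H I (trAtomA P S env a) ↔
      (((a.pred, a.args.map (PrgTerm.toP env)) : GAtom) ∈ AIof P S I ∧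
       ((a.pred, a.args.map (PrgTerm.toP env)) : GAtom) ∈ AIof P S H) := by
  rw [trAtomA]
  split
  · next h =>
      simp only [htA]
      rw [satA_patomAux I env a h, satA_patomAux H env a h]
  · next h =>
      simp only [htA]
      constructor
      · exact False.elim
      · rintro ⟨⟨h', _⟩, _⟩
        exact h (by simpa using h')

lemma satA_trAFA (I : AInterp (sigPS P S)) (env : ℕ → PTerm) (af : AtomicF) :
    satA I (trAFA P S env af) ↔ psat (AIof P S I) (trAFIF env af) := by
  cases af with
  | atm a => rw [trAFA, trAFIF, satA_trAtomA]; rfl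
  | cmp l c r =>
      rw [trAFA, trAFIF]
      show c.holds (l.toP env) (r.toP env) ↔ _
      split <;> simp_all

lemma htA_trAFA (H I : AInterp (sigPS P S)) (env : ℕ → PTerm) (af : AtomicF) :
    htA H I (trAFA P S env af) ↔ psat (AIof P S H) (reduct (AIof P S I) (trAFIF env af)) := by
  cases af with
  | atm a => rw [trAFA, trAFIF, htA_trAtomA, trAtomIF, red_atom]
  | cmp l c r =>
      rw [trAFA, trAFIF]
      show (c.holds (l.toP env) (r.toP env) ∧ c.holds (l.toP env) (r.toP env)) ↔ _
      split
      · simp_all [red_top]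
      · simp_all [red_bot]

lemma nots_cls {I : AInterp (sigPS P S)} {A : Set GAtom} {F : AFml (sigPS P S)} {F' : IF}
    (hc : satA I F ↔ psat A F') (n : Nots) :
    satA I (applyNots Sem.cli n F) ↔ psat A (notsIF n F') := by
  cases n with
  | zero => exact hc
  | one => rw [applyNots, notsIF, satA_neg, psat_negIF, hc]
  | two =>
      rw [applyNots, notsIF, satA_neg, satA_neg, psat_negIF, psat_negIF, hc]

lemma nots_ht {H I : AInterp (sigPS P S)} {A B : Set GAtom} {F : AFml (sigPS P S)} {F' : IF}
    (hc : satA I F ↔ psat A F') (hh : htA H I F ↔ psat B (reduct A F')) (n : Nots) :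
    htA H I (applyNots Sem.cli n F) ↔ psat B (reduct A (notsIF n F')) := by
  cases n with
  | zero => exact hh
  | one => rw [applyNots, notsIF, htA_neg, red_neg, hc]
  | two =>
      rw [applyNots, notsIF, htA_neg, red_neg, psat_negIF, satA_neg, hc]

lemma satA_trBLit (I : AInterp (sigPS P S)) (env : ℕ → PTerm) (l : BLit) :
    satA I (trBLitA P S Sem.cli env l) ↔ psat (AIof P S I) (trBLitIF env l) := by
  rw [trBLitA, trBLitIF]
  exact nots_cls (satA_trAFA I env l.af) l.nots

lemma htA_trBLit (H I : AInterp (sigPS P S)) (env : ℕ → PTerm) (l : BLit) :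
    htA H I (trBLitA P S Sem.cli env l) ↔
      psat (AIof P S H) (reduct (AIof P S I) (trBLitIF env l)) := by
  rw [trBLitA, trBLitIF]
  exact nots_ht (satA_trAFA I env l.af) (htA_trAFA H I env l.af) l.nots

end TransLems

section EnvCongr

variable {P : Set (ℕ × ℕ)} {S : Set SetSymbol}

lemma mem_foldr_append {α : Type*} {β : Type*} (g : α → List β) (l : List α) (init : List β) (x : β) :
    x ∈ l.foldr (fun t acc => g t ++ acc) init ↔ (∃ t ∈ l, x ∈ g t) ∨ x ∈ init := by
  induction l with
  | nil => simp
  | cons a l ih =>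
      simp only [List.foldr_cons, List.mem_append, ih, List.mem_cons]
      constructor
      · rintro (h | (⟨t, ht, hx⟩ | h))
        · exact Or.inl ⟨a, Or.inl rfl, h⟩
        · exact Or.inl ⟨t, Or.inr ht, hx⟩
        · exact Or.inr h
      · rintro (⟨t, (rfl | ht), hx⟩ | h)
        · exact Or.inl hx
        · exact Or.inr (Or.inl ⟨t, ht, hx⟩)
        · exact Or.inr (Or.inr h)

lemma term_vars_sub_atom {t : PrgTerm} {a : Atom} (ht : t ∈ a.args) {x : ℕ}
    (hx : x ∈ t.varsL) : x ∈ a.varsL :=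
  (mem_foldr_append PrgTerm.varsL a.args [] x).mpr (Or.inl ⟨t, ht, hx⟩)

lemma term_vars_sub_elem {t : PrgTerm} {E : AggElem} (ht : t ∈ E.terms) {x : ℕ}
    (hx : x ∈ t.varsL) : x ∈ E.varsL :=
  List.mem_append.mpr (Or.inl ((mem_foldr_append PrgTerm.varsL E.terms [] x).mpr
    (Or.inl ⟨t, ht, hx⟩)))

lemma lit_vars_sub_elem {l : BLit} {E : AggElem} (hl : l ∈ E.lits) {x : ℕ}
    (hx : x ∈ l.varsL) : x ∈ E.varsL :=
  List.mem_append.mpr (Or.inr ((mem_foldr_append BLit.varsL E.lits [] x).mpr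
    (Or.inl ⟨l, hl, hx⟩)))

lemma toP_congr {e₁ e₂ : ℕ → PTerm} (t : PrgTerm) (h : ∀ v ∈ t.varsL, e₁ v = e₂ v) :
    t.toP e₁ = t.toP e₂ := by
  cases t with
  | ground => rfl
  | var v => exact h v (by simp [PrgTerm.varsL])

lemma trAtomA_congr {e₁ e₂ : ℕ → PTerm} (a : Atom) (h : ∀ v ∈ a.varsL, e₁ v = e₂ v) :
    trAtomA P S e₁ a = trAtomA P S e₂ a := by
  by_cases hp : (a.pred, a.args.length) ∈ P
  · rw [trAtomA, trAtomA, dif_pos hp, dif_pos hp]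
    congr 1
    funext i
    congr 1
    exact toP_congr _ (fun v hv => h v (term_vars_sub_atom (a.args.get_mem ..) hv))
  · rw [trAtomA, trAtomA, dif_neg hp, dif_neg hp]

lemma trAFA_congr {e₁ e₂ : ℕ → PTerm} (af : AtomicF) (h : ∀ v ∈ af.varsL, e₁ v = e₂ v) :
    trAFA P S e₁ af = trAFA P S e₂ af := by
  cases af with
  | atm a => exact trAtomA_congr a h
  | cmp l c r =>
      rw [trAFA, trAFA]
      rw [toP_congr l (fun v hv => h v (List.mem_append.mpr (Or.inl hv))),
        toP_congr r (fun v hv => h v (List.mem_append.mpr (Or.inr hv)))]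

lemma trBLitA_congr {e₁ e₂ : ℕ → PTerm} (x : Sem) (l : BLit) (h : ∀ v ∈ l.varsL, e₁ v = e₂ v) :
    trBLitA P S x e₁ l = trBLitA P S x e₂ l := by
  rw [trBLitA, trBLitA, trAFA_congr l.af h]

lemma terms_map_congr {e₁ e₂ : ℕ → PTerm} (E : AggElem) (h : ∀ v ∈ E.varsL, e₁ v = e₂ v) :
    E.terms.map (PrgTerm.toP e₁) = E.terms.map (PrgTerm.toP e₂) :=
  List.map_congr_left fun t ht => toP_congr t fun v hv => h v (term_vars_sub_elem ht hv)

lemma mem_localsOf {E : AggElem} {X : List ℕ} {v : ℕ} :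
    v ∈ localsOf E X ↔ v ∈ E.varsL ∧ v ∉ X := by
  rw [localsOf, mem_sortedL, List.mem_filter]
  simp

lemma envXY_agree (E : AggElem) (X : List ℕ) (env : ℕ → PTerm)
    (y : Fin (localsOf E X).length → PTerm) :
    ∀ v ∈ E.varsL,
      envXY X (fun i => env (X.get i)) (localsOf E X) y v = assign (localsOf E X) y env v := by
  intro v hv
  by_cases hX : v ∈ X
  · have hY : v ∉ localsOf E X := fun hm => (mem_localsOf.mp hm).2 hX
    have hlt : X.idxOf v < X.length := List.idxOf_lt_length_iff.mpr hX
    simp only [envXY, assign, dif_pos hX, dif_neg hY]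
    congr 1
    exact List.idxOf_get hlt
  · have hY : v ∈ localsOf E X := mem_localsOf.mpr ⟨hv, hX⟩
    simp only [envXY, assign, dif_neg hX, dif_pos hY]

lemma psat_litsConj (X : Set GAtom) (E : AggElem) (env : ℕ → PTerm) :
    psat X (litsConjIF E env) ↔ ∀ l ∈ E.lits, psat X (trBLitIF env l) := by
  show (∀ i : Fin E.lits.length, psat X (trBLitIF env (E.lits.get i))) ↔ _
  constructor
  · intro h l hl
    obtain ⟨i, rfl⟩ := List.mem_iff_get.mp hl
    exact h i
  · intro h i
    exact h _ (E.lits.get_mem ..)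

lemma red_litsConj (X A : Set GAtom) (E : AggElem) (env : ℕ → PTerm) :
    psat X (reduct A (litsConjIF E env)) ↔ ∀ l ∈ E.lits, psat X (reduct A (trBLitIF env l)) := by
  rw [litsConjIF, red_conj']
  constructor
  · intro h l hl
    obtain ⟨i, rfl⟩ := List.mem_iff_get.mp hl
    exact h i
  · intro h i
    exact h _ (E.lits.get_mem ..)

end EnvCongr
section Agg

variable {P : Set (ℕ × ℕ)} {S : Set SetSymbol}

/-- The Ferraris-style characterization of the reduct of the Abstract Gringo
translation of an aggregate atom. -/
lemma ferraris (Bs As : Set GAtom) (R : Rule) (env : ℕ → PTerm) (Ag : AggAtom) :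
    psat Bs (reduct As (trAggAtomIF R env Ag)) ↔
      (justifies Ag.op Ag.rel (Ag.guard.toP env) Ag.elem
          (localsOf Ag.elem (aggX R Ag.elem)) env
          {y | psat As (litsConjIF Ag.elem (assign (localsOf Ag.elem (aggX R Ag.elem)) y env))} ∧
       justifies Ag.op Ag.rel (Ag.guard.toP env) Ag.elem
          (localsOf Ag.elem (aggX R Ag.elem)) env
          {y | psat Bs (reduct As
            (litsConjIF Ag.elem (assign (localsOf Ag.elem (aggX R Ag.elem)) y env)))}) := by
  set Y := localsOf Ag.elem (aggX R Ag.elem) with hY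
  set YI : Set (Fin Y.length → PTerm) :=
    {y | psat As (litsConjIF Ag.elem (assign Y y env))} with hYI
  set YB : Set (Fin Y.length → PTerm) :=
    {y | psat Bs (reduct As (litsConjIF Ag.elem (assign Y y env)))} with hYB
  have hsub : YB ⊆ YI := fun y hy => psat_reduct_imp Bs As _ hy
  rw [trAggAtomIF, red_conj']
  constructor
  · intro h
    constructor
    · by_contra hn
      have h2 := h ⟨YI, hn⟩
      rw [red_impl] at h2
      have hcl := h2.1
      simp only [psat] at hcl
      obtain ⟨⟨y, hyn⟩, hy⟩ := hcl (fun y => y.2)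
      exact hyn hy
    · by_contra hn
      have h2 := h ⟨YB, hn⟩
      rw [red_impl] at h2
      have := h2.2 (by
        rw [red_conj']
        exact fun y => y.2)
      rw [red_disj'] at this
      obtain ⟨⟨y, hyn⟩, hy⟩ := this
      exact hyn hy
  · rintro ⟨hI, hB⟩ Δ
    rw [red_impl]
    have hneI : Δ.val ≠ YI := fun e => Δ.2 (e ▸ hI)
    have hneB : Δ.val ≠ YB := fun e => Δ.2 (e ▸ hB)
    constructor
    · intro hC
      have hsubI : Δ.val ⊆ YI := fun y hy => hC ⟨y, hy⟩
      obtain ⟨y, hyI, hyn⟩ := Set.exists_of_ssubset (ssubset_of_subset_of_ne hsubI hneI)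
      exact ⟨⟨y, hyn⟩, hyI⟩
    · intro hC
      rw [red_conj'] at hC
      have hsubB : Δ.val ⊆ YB := fun y hy => hC ⟨y, hy⟩
      obtain ⟨y, hyB, hyn⟩ := Set.exists_of_ssubset (ssubset_of_subset_of_ne hsubB hneB)
      rw [red_disj']
      exact ⟨⟨y, hyn⟩, hyB⟩

lemma aggSetI_eq (I : AInterp (sigPS P S)) (E : AggElem) (X : List ℕ) (env : ℕ → PTerm) :
    aggSetI P S Sem.cli I ⟨E, X⟩ (fun i => env (X.get i)) =
      {t | ∃ y ∈ {y : Fin (localsOf E X).length → PTerm |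
              psat (AIof P S I) (litsConjIF E (assign (localsOf E X) y env))},
            t = tupleOf E (assign (localsOf E X) y env)} := by
  ext t
  simp only [aggSetI, Set.mem_setOf_eq, tupleOf]
  constructor
  · rintro ⟨y, rfl, hsat⟩
    refine ⟨y, ?_, ?_⟩
    · rw [psat_litsConj]
      intro l hl
      rw [← satA_trBLit]
      rw [← trBLitA_congr Sem.cli l
        (fun v hv => envXY_agree E X env y v (lit_vars_sub_elem hl hv))]
      exact hsat l hl
    · exact terms_map_congr E (envXY_agree E X env y)
  · rintro ⟨y, hy, rfl⟩
    refine ⟨y, (terms_map_congr E (envXY_agree E X env y)).symm, ?_⟩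
    intro l hl
    rw [trBLitA_congr Sem.cli l
      (fun v hv => envXY_agree E X env y v (lit_vars_sub_elem hl hv))]
    rw [satA_trBLit]
    exact (psat_litsConj _ E _).mp hy l hl

lemma aggSetHT_eq (H I : AInterp (sigPS P S)) (E : AggElem) (X : List ℕ) (env : ℕ → PTerm) :
    aggSetHT P S H I ⟨E, X⟩ (fun i => env (X.get i)) =
      {t | ∃ y ∈ {y : Fin (localsOf E X).length → PTerm |
              psat (AIof P S H) (reduct (AIof P S I) (litsConjIF E (assign (localsOf E X) y env)))},
            t = tupleOf E (assign (localsOf E X) y env)} := by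
  ext t
  simp only [aggSetHT, Set.mem_setOf_eq, tupleOf]
  constructor
  · rintro ⟨y, rfl, hsat⟩
    refine ⟨y, ?_, terms_map_congr E (envXY_agree E X env y)⟩
    rw [red_litsConj]
    intro l hl
    rw [← htA_trBLit]
    rw [← trBLitA_congr Sem.cli l
      (fun v hv => envXY_agree E X env y v (lit_vars_sub_elem hl hv))]
    exact hsat l hl
  · rintro ⟨y, hy, rfl⟩
    refine ⟨y, (terms_map_congr E (envXY_agree E X env y)).symm, ?_⟩
    intro l hl
    rw [trBLitA_congr Sem.cli l
      (fun v hv => envXY_agree E X env y v (lit_vars_sub_elem hl hv))]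
    rw [htA_trBLit]
    exact (red_litsConj _ _ E _).mp hy l hl

end Agg
section AggSat

variable {P : Set (ℕ × ℕ)} {S : Set SetSymbol}

lemma satA_trAggAtom (I : AInterp (sigPS P S)) (hI : IsAggInterp P S I) (R : Rule)
    (Ag : AggAtom) (hs : (⟨Ag.elem, aggX R Ag.elem⟩ : SetSymbol) ∈ S) (env : ℕ → PTerm) :
    satA I (trAggAtomA P S Sem.cli (aggX R Ag.elem) env Ag) ↔
      psat (AIof P S I) (trAggAtomIF R env Ag) := by
  rw [← psat_reduct_self, ferraris]
  have hYeq : {y : Fin (localsOf Ag.elem (aggX R Ag.elem)).length → PTerm |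
        psat (AIof P S I) (reduct (AIof P S I)
          (litsConjIF Ag.elem (assign (localsOf Ag.elem (aggX R Ag.elem)) y env)))} =
      {y | psat (AIof P S I)
          (litsConjIF Ag.elem (assign (localsOf Ag.elem (aggX R Ag.elem)) y env))} := by
    ext y; exact psat_reduct_self _ _
  rw [hYeq, and_self]
  rw [trAggAtomA, dif_pos hs]
  have hsfn : STm.eval I (STm.sfn ((Sem.cli, ⟨⟨Ag.elem, aggX R Ag.elem⟩, hs⟩) : (sigPS P S).SSym)
      (fun i => .name (env ((aggX R Ag.elem).get i)))) =
      aggSetI P S Sem.cli I ⟨Ag.elem, aggX R Ag.elem⟩ (fun i => env ((aggX R Ag.elem).get i)) := by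
    rw [STm.eval.eq_def]
    exact hI.2 Sem.cli ⟨⟨Ag.elem, aggX R Ag.elem⟩, hs⟩ (fun i => env ((aggX R Ag.elem).get i))
  rw [justifies, ← aggSetI_eq]
  cases Ag.op <;> simp only [satA, GTm.eval, hsfn, AggOp.hat]

lemma htA_trAggAtom (H I : AInterp (sigPS P S)) (hAgg : IsAggHT P S H I) (R : Rule)
    (Ag : AggAtom) (hs : (⟨Ag.elem, aggX R Ag.elem⟩ : SetSymbol) ∈ S) (env : ℕ → PTerm) :
    htA H I (trAggAtomA P S Sem.cli (aggX R Ag.elem) env Ag) ↔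
      psat (AIof P S H) (reduct (AIof P S I) (trAggAtomIF R env Ag)) := by
  rw [ferraris]
  rw [trAggAtomA, dif_pos hs]
  have hsfnI : STm.eval I (STm.sfn ((Sem.cli, ⟨⟨Ag.elem, aggX R Ag.elem⟩, hs⟩) : (sigPS P S).SSym)
      (fun i => .name (env ((aggX R Ag.elem).get i)))) =
      aggSetI P S Sem.cli I ⟨Ag.elem, aggX R Ag.elem⟩ (fun i => env ((aggX R Ag.elem).get i)) := by
    rw [STm.eval.eq_def]
    exact hAgg.2.2.1.2 Sem.cli ⟨⟨Ag.elem, aggX R Ag.elem⟩, hs⟩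
      (fun i => env ((aggX R Ag.elem).get i))
  have hsfnH : STm.eval H (STm.sfn ((Sem.cli, ⟨⟨Ag.elem, aggX R Ag.elem⟩, hs⟩) : (sigPS P S).SSym)
      (fun i => .name (env ((aggX R Ag.elem).get i)))) =
      aggSetHT P S H I ⟨Ag.elem, aggX R Ag.elem⟩ (fun i => env ((aggX R Ag.elem).get i)) := by
    rw [STm.eval.eq_def]
    exact hAgg.2.2.2.1 ⟨⟨Ag.elem, aggX R Ag.elem⟩, hs⟩ (fun i => env ((aggX R Ag.elem).get i))
  rw [justifies, justifies, ← aggSetI_eq, ← aggSetHT_eq]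
  cases Ag.op <;> simp only [htA, satA, GTm.eval, hsfnI, hsfnH, AggOp.hat]

end AggSat
section RuleLems

variable {P : Set (ℕ × ℕ)} {S : Set SetSymbol}

/-- All symbols `E/X` of aggregate literals of `R` belong to `S`. -/
def RuleOk (S : Set SetSymbol) (R : Rule) : Prop :=
  ∀ al : AggLit, Lit.aggr al ∈ R.body → (⟨al.agg.elem, aggX R al.agg.elem⟩ : SetSymbol) ∈ S

lemma isAggHT_refl (I : AInterp (sigPS P S)) (hI : IsAggInterp P S I) : IsAggHT P S I I := by
  refine ⟨⟨rfl, fun _ _ _ h => h, fun _ _ _ => Iff.rfl, fun _ _ _ => rfl⟩, hI.1, hI, ?_, ?_⟩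
  · intro ss a
    rw [hI.2 Sem.cli ss a]
    ext t
    simp only [aggSetI, aggSetHT, Set.mem_setOf_eq]
    constructor
    · rintro ⟨y, rfl, h⟩
      exact ⟨y, rfl, fun l hl => (htA_refl _).mpr (h l hl)⟩
    · rintro ⟨y, rfl, h⟩
      exact ⟨y, rfl, fun l hl => (htA_refl _).mp (h l hl)⟩
  · intro ss a
    exact hI.2 Sem.dlv ss a

lemma satA_trLit (I : AInterp (sigPS P S)) (hI : IsAggInterp P S I) (R : Rule)
    (hR : RuleOk S R) (env : ℕ → PTerm) (l : Lit) (hl : l ∈ R.body) :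
    satA I (trLitA P S Sem.cli R env l) ↔ psat (AIof P S I) (trLitIF R env l) := by
  cases l with
  | basic b => exact satA_trBLit I env b
  | aggr al =>
      rw [trLitA, trLitIF]
      exact nots_cls (satA_trAggAtom I hI R al.agg (hR al hl) env) al.nots

lemma htA_trLit (H I : AInterp (sigPS P S)) (hAgg : IsAggHT P S H I) (R : Rule)
    (hR : RuleOk S R) (env : ℕ → PTerm) (l : Lit) (hl : l ∈ R.body) :
    htA H I (trLitA P S Sem.cli R env l) ↔
      psat (AIof P S H) (reduct (AIof P S I) (trLitIF R env l)) := by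
  cases l with
  | basic b => exact htA_trBLit H I env b
  | aggr al =>
      rw [trLitA, trLitIF]
      exact nots_ht (satA_trAggAtom I hAgg.2.2.1 R al.agg (hR al hl) env)
        (htA_trAggAtom H I hAgg R al.agg (hR al hl) env) al.nots

lemma htA_trMatrix (H I : AInterp (sigPS P S)) (hAgg : IsAggHT P S H I) (R : Rule)
    (hR : RuleOk S R) (env : ℕ → PTerm) :
    htA H I (trMatrix P S Sem.cli R env) ↔
      psat (AIof P S H) (reduct (AIof P S I)
        (.impl (.conj (Fin R.body.length) (fun i => trLitIF R env (R.body.get i)))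
          (match R.head with
            | some a => trAtomIF env a
            | none => IF.bot))) := by
  set A := AIof P S I
  set B := AIof P S H
  have hcF : satA I (conjL (R.body.map (trLitA P S Sem.cli R env))) ↔
      psat A (.conj (Fin R.body.length) (fun i => trLitIF R env (R.body.get i))) := by
    rw [satA_conjL]
    show _ ↔ ∀ i : Fin R.body.length, psat A (trLitIF R env (R.body.get i))
    constructor
    · intro h i
      rw [← satA_trLit I hAgg.2.2.1 R hR env _ (R.body.get_mem ..)]
      exact h _ (List.mem_map.mpr ⟨_, R.body.get_mem .., rfl⟩)
    · rintro h F hF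
      obtain ⟨l, hl, rfl⟩ := List.mem_map.mp hF
      obtain ⟨i, rfl⟩ := List.mem_iff_get.mp hl
      rw [satA_trLit I hAgg.2.2.1 R hR env _ (R.body.get_mem ..)]
      exact h i
  have hhF : htA H I (conjL (R.body.map (trLitA P S Sem.cli R env))) ↔
      psat B (reduct A (.conj (Fin R.body.length) (fun i => trLitIF R env (R.body.get i)))) := by
    rw [htA_conjL, red_conj']
    constructor
    · intro h i
      rw [← htA_trLit H I hAgg R hR env _ (R.body.get_mem ..)]
      exact h _ (List.mem_map.mpr ⟨_, R.body.get_mem .., rfl⟩)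
    · rintro h F hF
      obtain ⟨l, hl, rfl⟩ := List.mem_map.mp hF
      obtain ⟨i, rfl⟩ := List.mem_iff_get.mp hl
      rw [htA_trLit H I hAgg R hR env _ (R.body.get_mem ..)]
      exact h i
  have hcG : satA I (match R.head with | some a => trAtomA P S env a | none => AFml.fls) ↔
      psat A (match R.head with | some a => trAtomIF env a | none => IF.bot) := by
    cases R.head with
    | some a => rw [satA_trAtomA]; rfl
    | none => simp [satA]
  have hhG : htA H I (match R.head with | some a => trAtomA P S env a | none => AFml.fls) ↔
      psat B (reduct A (match R.head with | some a => trAtomIF env a | none => IF.bot)) := by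
    cases R.head with
    | some a =>
        rw [htA_trAtomA]
        show _ ↔ psat B (reduct A (IF.atom (a.pred, a.args.map (PrgTerm.toP env))))
        rw [red_atom]
    | none => simp [htA, red_bot]
  rw [trMatrix, red_impl]
  simp only [htA, psat]
  rw [hcF, hhF, hcG, hhG]
  constructor
  · rintro ⟨h1, h2⟩
    exact ⟨h1, fun hB => h2.elim (fun h => absurd hB h) id⟩
  · rintro ⟨h1, h2⟩
    refine ⟨h1, ?_⟩
    by_cases hB : psat B (reduct A (.conj (Fin R.body.length)
        (fun i => trLitIF R env (R.body.get i))))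
    · exact Or.inr (h2 hB)
    · exact Or.inl hB

lemma htA_trRule (H I : AInterp (sigPS P S)) (hAgg : IsAggHT P S H I) (R : Rule)
    (hR : RuleOk S R) :
    htA H I (trRuleA P S Sem.cli R) ↔
      psat (AIof P S H) (reduct (AIof P S I) (trRuleIF R)) := by
  rw [trRuleA, trRuleIF, red_conj',
    closeG_htA (globalVarsSorted R) (nodup_sortedL _) (trMatrix P S Sem.cli R) (fun _ => .inf)]
  constructor
  · intro h z
    have h2 := h (assign (globalVarsSorted R) z (fun _ => PTerm.inf))
    rw [← assign_eq_override] at h2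
    rw [← htA_trMatrix H I hAgg R hR]
    exact h2
  · intro h f
    rw [htA_trMatrix H I hAgg R hR]
    rw [override_eq_assign]
    exact h _

lemma satA_trRule (I : AInterp (sigPS P S)) (hI : IsAggInterp P S I) (R : Rule)
    (hR : RuleOk S R) :
    satA I (trRuleA P S Sem.cli R) ↔ psat (AIof P S I) (trRuleIF R) := by
  rw [← htA_refl, htA_trRule I I (isAggHT_refl I hI) R hR, psat_reduct_self]

lemma htSatTh_iff (H I : AInterp (sigPS P S)) (hAgg : IsAggHT P S H I) (Pi : Program)
    (hPi : ∀ R ∈ Pi, RuleOk S R) :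
    htSatTh H I (trProgA P S Sem.cli Pi) ↔
      ∀ R ∈ Pi, psat (AIof P S H) (reduct (AIof P S I) (trRuleIF R)) := by
  constructor
  · intro h R hR
    rw [← htA_trRule H I hAgg R (hPi R hR)]
    exact h _ ⟨R, hR, rfl⟩
  · rintro h F ⟨R, hR, rfl⟩
    rw [htA_trRule H I hAgg R (hPi R hR)]
    exact h R hR

lemma psat_red_trProg (X A : Set GAtom) (Pi : Program) :
    psat X (reduct A (trProgIF Pi)) ↔ ∀ R ∈ Pi, psat X (reduct A (trRuleIF R)) := by
  rw [trProgIF, red_conj']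
  exact ⟨fun h R hR => h ⟨R, hR⟩, fun h R => h R.val R.property⟩

end RuleLems
section Canon

variable {P : Set (ℕ × ℕ)} {S : Set SetSymbol}

lemma satA_trAFA_pr {I₁ I₂ : AInterp (sigPS P S)} (h : ∀ p a, I₁.pr p a ↔ I₂.pr p a)
    (env : ℕ → PTerm) (af : AtomicF) :
    satA I₁ (trAFA P S env af) ↔ satA I₂ (trAFA P S env af) := by
  cases af with
  | atm a =>
      show satA I₁ (trAtomA P S env a) ↔ satA I₂ (trAtomA P S env a)
      rw [trAtomA]
      split
      · simp only [satA, GTm.eval]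
        exact h _ _
      · exact Iff.rfl
  | cmp l c r => exact Iff.rfl

lemma satA_trBLit_pr {I₁ I₂ : AInterp (sigPS P S)} (h : ∀ p a, I₁.pr p a ↔ I₂.pr p a)
    (x : Sem) (env : ℕ → PTerm) (l : BLit) :
    satA I₁ (trBLitA P S x env l) ↔ satA I₂ (trBLitA P S x env l) := by
  obtain ⟨n, af⟩ := l
  cases n with
  | zero => exact satA_trAFA_pr h env af
  | one =>
      cases x with
      | cli =>
          show satA I₁ (AFml.neg _) ↔ satA I₂ (AFml.neg _)
          rw [satA_neg, satA_neg, satA_trAFA_pr h env af]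
      | dlv =>
          show ¬ satA I₁ _ ↔ ¬ satA I₂ _
          rw [satA_trAFA_pr h env af]
  | two =>
      cases x with
      | cli =>
          show satA I₁ (AFml.neg (AFml.neg _)) ↔ satA I₂ (AFml.neg (AFml.neg _))
          rw [satA_neg, satA_neg, satA_neg, satA_neg, satA_trAFA_pr h env af]
      | dlv =>
          show ¬ ¬ satA I₁ _ ↔ ¬ ¬ satA I₂ _
          rw [satA_trAFA_pr h env af]

lemma htA_trBLit_pr {H₁ I₁ H₂ I₂ : AInterp (sigPS P S)}
    (hH : ∀ p a, H₁.pr p a ↔ H₂.pr p a) (hI : ∀ p a, I₁.pr p a ↔ I₂.pr p a)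
    (env : ℕ → PTerm) (l : BLit) :
    htA H₁ I₁ (trBLitA P S Sem.cli env l) ↔ htA H₂ I₂ (trBLitA P S Sem.cli env l) := by
  obtain ⟨n, af⟩ := l
  have haf : htA H₁ I₁ (trAFA P S env af) ↔ htA H₂ I₂ (trAFA P S env af) := by
    cases af with
    | atm a =>
        show htA H₁ I₁ (trAtomA P S env a) ↔ htA H₂ I₂ (trAtomA P S env a)
        rw [trAtomA]
        split
        · simp only [htA, satA, GTm.eval]
          exact and_congr (hI _ _) (hH _ _)
        · exact Iff.rfl
    | cmp l c r => exact Iff.rfl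
  cases n with
  | zero => exact haf
  | one =>
      show htA H₁ I₁ (AFml.neg _) ↔ htA H₂ I₂ (AFml.neg _)
      rw [htA_neg, htA_neg, satA_trAFA_pr hI env af]
  | two =>
      show htA H₁ I₁ (AFml.neg (AFml.neg _)) ↔ htA H₂ I₂ (AFml.neg (AFml.neg _))
      rw [htA_neg, htA_neg, satA_neg, satA_neg, satA_trAFA_pr hI env af]

lemma aggSetI_pr_congr {I₁ I₂ : AInterp (sigPS P S)} (h : ∀ p a, I₁.pr p a ↔ I₂.pr p a)
    (x : Sem) (ss : SetSymbol) (a : Fin ss.gvars.length → PTerm) :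
    aggSetI P S x I₁ ss a = aggSetI P S x I₂ ss a := by
  ext t
  simp only [aggSetI, Set.mem_setOf_eq]
  exact exists_congr fun y => and_congr_right fun _ =>
    forall_congr' fun l => forall_congr' fun hl => satA_trBLit_pr h x _ l

lemma aggSetHT_pr_congr {H₁ I₁ H₂ I₂ : AInterp (sigPS P S)}
    (hH : ∀ p a, H₁.pr p a ↔ H₂.pr p a) (hI : ∀ p a, I₁.pr p a ↔ I₂.pr p a)
    (ss : SetSymbol) (a : Fin ss.gvars.length → PTerm) :
    aggSetHT P S H₁ I₁ ss a = aggSetHT P S H₂ I₂ ss a := by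
  ext t
  simp only [aggSetHT, Set.mem_setOf_eq]
  exact exists_congr fun y => and_congr_right fun _ =>
    forall_congr' fun l => forall_congr' fun hl => htA_trBLit_pr hH hI _ l

/-- The predicate denotations induced by a set of ground atoms. -/
def prOf (P : Set (ℕ × ℕ)) (S : Set SetSymbol) (C : Set GAtom) :
    (p : (sigPS P S).PSym) → (Fin ((sigPS P S).parity p) → PTerm) → Prop :=
  fun p a => ((p.val.1, List.ofFn a) : GAtom) ∈ C

/-- A helper interpretation with trivial set functions. -/
def dummyI (P : Set (ℕ × ℕ)) (S : Set SetSymbol) (C : Set GAtom) : AInterp (sigPS P S) :=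
  ⟨{s | s ⊆ tupDom (sigPS P S)}, prOf P S C, fun _ _ => ∅⟩

/-- The canonical agg-interpretation determined by a set of ground atoms. -/
noncomputable def canonI (P : Set (ℕ × ℕ)) (S : Set SetSymbol) (A : Set GAtom) :
    AInterp (sigPS P S) where
  setDom := {s | s ⊆ tupDom (sigPS P S)}
  pr := prOf P S A
  sfn := fun f a => aggSetI P S f.1 (dummyI P S A) f.2.val a

/-- The canonical "here" interpretation determined by a pair of sets of ground atoms. -/
noncomputable def canonH (P : Set (ℕ × ℕ)) (S : Set SetSymbol) (B A : Set GAtom) :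
    AInterp (sigPS P S) where
  setDom := {s | s ⊆ tupDom (sigPS P S)}
  pr := prOf P S B
  sfn := fun f a =>
    match f.1 with
    | Sem.cli => aggSetHT P S (dummyI P S B) (dummyI P S A) f.2.val a
    | Sem.dlv => aggSetI P S Sem.dlv (dummyI P S B) f.2.val a

lemma aggSetI_sub_tupDom {x : Sem} {I : AInterp (sigPS P S)} {ss : ↥S}
    {a : Fin ss.val.gvars.length → PTerm} :
    aggSetI P S x I ss.val a ∈ {s | s ⊆ tupDom (sigPS P S)} := by
  rintro t ⟨y, rfl, -⟩
  exact ⟨ss, by simp [sigPS]⟩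

lemma aggSetHT_sub_tupDom {H I : AInterp (sigPS P S)} {ss : ↥S}
    {a : Fin ss.val.gvars.length → PTerm} :
    aggSetHT P S H I ss.val a ∈ {s | s ⊆ tupDom (sigPS P S)} := by
  rintro t ⟨y, rfl, -⟩
  exact ⟨ss, by simp [sigPS]⟩

lemma canonI_isAggInterp (A : Set GAtom) : IsAggInterp P S (canonI P S A) := by
  refine ⟨⟨fun s hs => hs, fun f a => aggSetI_sub_tupDom⟩, ?_⟩
  intro x ss a
  show aggSetI P S x (dummyI P S A) ss.val a = aggSetI P S x (canonI P S A) ss.val a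
  exact aggSetI_pr_congr (I₁ := dummyI P S A) (I₂ := canonI P S A) (fun _ _ => Iff.rfl) x ss.val a

lemma canon_isAggHT {B A : Set GAtom} (hBA : B ⊆ A) :
    IsAggHT P S (canonH P S B A) (canonI P S A) := by
  refine ⟨⟨rfl, fun p _ a h => hBA h, fun p hp => absurd (Set.mem_univ p) hp,
      fun f hf => absurd (Set.mem_univ f) hf⟩,
    ⟨fun s hs => hs, fun f a => ?_⟩, canonI_isAggInterp A, ?_, ?_⟩
  · show (match f.1 with
      | Sem.cli => aggSetHT P S (dummyI P S B) (dummyI P S A) f.2.val a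
      | Sem.dlv => aggSetI P S Sem.dlv (dummyI P S B) f.2.val a) ∈ _
    obtain ⟨x, ss⟩ := f
    cases x with
    | cli => exact aggSetHT_sub_tupDom
    | dlv => exact aggSetI_sub_tupDom
  · intro ss a
    show aggSetHT P S (dummyI P S B) (dummyI P S A) ss.val a
        = aggSetHT P S (canonH P S B A) (canonI P S A) ss.val a
    exact aggSetHT_pr_congr (H₁ := dummyI P S B) (I₁ := dummyI P S A)
      (H₂ := canonH P S B A) (I₂ := canonI P S A)
      (fun _ _ => Iff.rfl) (fun _ _ => Iff.rfl) ss.val a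
  · intro ss a
    show aggSetI P S Sem.dlv (dummyI P S B) ss.val a
        = aggSetI P S Sem.dlv (canonH P S B A) ss.val a
    exact aggSetI_pr_congr (I₁ := dummyI P S B) (I₂ := canonH P S B A)
      (fun _ _ => Iff.rfl) Sem.dlv ss.val a

/-- The ground atoms over the predicate symbols of `P`. -/
def PAtoms (P : Set (ℕ × ℕ)) : Set GAtom := {g | (g.1, g.2.length) ∈ P}

lemma AIof_canonI (A : Set GAtom) : AIof P S (canonI P S A) = A ∩ PAtoms P := by
  ext g
  show (∃ _ : (g.1, g.2.length) ∈ P, ((g.1, List.ofFn fun i => g.2.get i) : GAtom) ∈ A) ↔ _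
  rw [List.ofFn_get]
  exact ⟨fun ⟨h1, h2⟩ => ⟨h2, h1⟩, fun ⟨h1, h2⟩ => ⟨h2, h1⟩⟩

lemma AIof_canonH (B A : Set GAtom) : AIof P S (canonH P S B A) = B ∩ PAtoms P := by
  ext g
  show (∃ _ : (g.1, g.2.length) ∈ P, ((g.1, List.ofFn fun i => g.2.get i) : GAtom) ∈ B) ↔ _
  rw [List.ofFn_get]
  exact ⟨fun ⟨h1, h2⟩ => ⟨h2, h1⟩, fun ⟨h1, h2⟩ => ⟨h2, h1⟩⟩

end Canon
section Over

variable {P : Set (ℕ × ℕ)} {S : Set SetSymbol}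

lemma head_mem_atomsL {R : Rule} {a : Atom} (h : R.head = some a) : a ∈ R.atomsL := by
  rw [Rule.atomsL, h]
  exact List.mem_append.mpr (Or.inl (by simp))

lemma basic_af_mem_atomsL {R : Rule} {b : BLit} (hb : Lit.basic b ∈ R.body) {a0 : Atom}
    (hat : a0 ∈ b.af.atomL) : a0 ∈ R.atomsL := by
  rw [Rule.atomsL]
  refine List.mem_append.mpr (Or.inr ?_)
  exact (mem_foldr_append (fun l => match l with
    | .basic b => b.af.atomL
    | .aggr al => al.agg.elem.lits.foldr (fun b acc2 => b.af.atomL ++ acc2) []) R.body [] a0).mpr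
    (Or.inl ⟨Lit.basic b, hb, hat⟩)

lemma agg_lit_mem_atomsL {R : Rule} {al : AggLit} (hb : Lit.aggr al ∈ R.body) {bl : BLit}
    (hbl : bl ∈ al.agg.elem.lits) {a0 : Atom} (hat : a0 ∈ bl.af.atomL) : a0 ∈ R.atomsL := by
  rw [Rule.atomsL]
  refine List.mem_append.mpr (Or.inr ?_)
  refine (mem_foldr_append (fun l => match l with
    | .basic b => b.af.atomL
    | .aggr al => al.agg.elem.lits.foldr (fun b acc2 => b.af.atomL ++ acc2) []) R.body [] a0).mpr
    (Or.inl ⟨Lit.aggr al, hb, ?_⟩)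
  exact (mem_foldr_append (fun b : BLit => b.af.atomL) al.agg.elem.lits [] a0).mpr
    (Or.inl ⟨bl, hbl, hat⟩)

lemma IFover_bot {PA : Set GAtom} : IFover PA IF.bot := fun i => i.elim

lemma IFover_top {PA : Set GAtom} : IFover PA IF.top := fun i => i.elim

lemma IFover_trAFIF (env : ℕ → PTerm) (af : AtomicF)
    (h : ∀ a ∈ af.atomL, (a.pred, a.args.length) ∈ P) : IFover (PAtoms P) (trAFIF env af) := by
  cases af with
  | atm a =>
      show ((a.pred, a.args.map (PrgTerm.toP env)) : GAtom) ∈ PAtoms P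
      show (a.pred, (a.args.map (PrgTerm.toP env)).length) ∈ P
      rw [List.length_map]
      exact h a (by simp [AtomicF.atomL])
  | cmp l c r =>
      rw [trAFIF]
      split
      · exact IFover_top
      · exact IFover_bot

lemma IFover_notsIF {PA : Set GAtom} (n : Nots) (F : IF) (h : IFover PA F) :
    IFover PA (notsIF n F) := by
  cases n with
  | zero => exact h
  | one => exact ⟨h, IFover_bot⟩
  | two => exact ⟨⟨h, IFover_bot⟩, IFover_bot⟩

lemma IFover_trBLitIF (env : ℕ → PTerm) (l : BLit)
    (h : ∀ a ∈ l.af.atomL, (a.pred, a.args.length) ∈ P) : IFover (PAtoms P) (trBLitIF env l) :=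
  IFover_notsIF l.nots _ (IFover_trAFIF env l.af h)

lemma IFover_litsConj (env : ℕ → PTerm) (E : AggElem)
    (h : ∀ bl ∈ E.lits, ∀ a ∈ bl.af.atomL, (a.pred, a.args.length) ∈ P) :
    IFover (PAtoms P) (litsConjIF E env) :=
  fun i => IFover_trBLitIF env _ (h _ (E.lits.get_mem ..))

lemma IFover_trAggAtomIF (R : Rule) (env : ℕ → PTerm) (Ag : AggAtom)
    (h : ∀ bl ∈ Ag.elem.lits, ∀ a ∈ bl.af.atomL, (a.pred, a.args.length) ∈ P) :
    IFover (PAtoms P) (trAggAtomIF R env Ag) :=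
  fun Δ => ⟨fun y => IFover_litsConj _ _ h, fun y => IFover_litsConj _ _ h⟩

lemma IFover_trRuleIF (R : Rule)
    (hats : ∀ a ∈ R.atomsL, (a.pred, a.args.length) ∈ P) :
    IFover (PAtoms P) (trRuleIF R) := by
  intro z
  constructor
  · intro i
    show IFover (PAtoms P)
      (trLitIF R (assign (globalVarsSorted R) z fun _ => PTerm.inf) (R.body.get i))
    rcases hli : R.body.get i with b | al
    · exact IFover_trBLitIF _ _ (fun a ha =>
        hats a (basic_af_mem_atomsL (hli ▸ R.body.get_mem ..) ha))
    · exact IFover_notsIF _ _ (IFover_trAggAtomIF R _ _ (fun bl hbl a ha =>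
        hats a (agg_lit_mem_atomsL (hli ▸ R.body.get_mem ..) hbl ha)))
  · rcases hhd : R.head with _ | a
    · exact IFover_bot
    · show ((a.pred, a.args.map _) : GAtom) ∈ PAtoms P
      show (a.pred, (a.args.map _).length) ∈ P
      rw [List.length_map]
      exact hats a (head_mem_atomsL hhd)

end Over
section Main

variable {P : Set (ℕ × ℕ)} {S : Set SetSymbol}

lemma ruleok_of_hS {Pi : Program} (hS : ssymsOf Pi ⊆ S) {R : Rule} (hR : R ∈ Pi) :
    RuleOk S R := fun al hal =>
  hS (show _ ∈ ssymsOf Pi from ⟨R, hR, al, hal, rfl⟩)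

lemma hats_of_hP {Pi : Program} (hP : predsOf Pi ⊆ P) {R : Rule} (hR : R ∈ Pi) :
    ∀ a ∈ R.atomsL, (a.pred, a.args.length) ∈ P := fun a ha =>
  hP (show _ ∈ predsOf Pi from ⟨R, hR, a, ha, rfl⟩)

lemma htSatTh_trProgA {H I : AInterp (sigPS P S)} {x : Sem} {Pi : Program} :
    htSatTh H I (trProgA P S x Pi) ↔ ∀ R ∈ Pi, htA H I (trRuleA P S x R) :=
  ⟨fun h R hR => h _ ⟨R, hR, rfl⟩, by rintro h F ⟨R, hR, rfl⟩; exact h R hR⟩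

lemma psat_red_rule_canon (X A : Set GAtom) (R : Rule)
    (hats : ∀ a ∈ R.atomsL, (a.pred, a.args.length) ∈ P) (hRok : RuleOk S R) :
    psat X (reduct A (trRuleIF R)) ↔
      htA (canonH P S (X ∩ A ∩ PAtoms P) (A ∩ PAtoms P)) (canonI P S (A ∩ PAtoms P))
        (trRuleA P S Sem.cli R) := by
  rw [htA_trRule _ _ (canon_isAggHT (B := X ∩ A ∩ PAtoms P) (A := A ∩ PAtoms P)
      (fun g hg => ⟨hg.1.2, hg.2⟩)) R hRok,
    AIof_canonH, AIof_canonI]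
  have e1 : (X ∩ A ∩ PAtoms P) ∩ PAtoms P = X ∩ A ∩ PAtoms P := by
    rw [Set.inter_assoc, Set.inter_self]
  have e2 : (A ∩ PAtoms P) ∩ PAtoms P = A ∩ PAtoms P := by
    rw [Set.inter_assoc, Set.inter_self]
  rw [e1, e2]
  have hover := IFover_trRuleIF R hats
  rw [psat_inter X A]
  rw [reduct_PAcongr (PA := PAtoms P) (A := A) (A' := A ∩ PAtoms P)
    (fun g hg => ⟨fun h => ⟨h, hg⟩, fun h => h.1⟩) _ hover]
  exact psat_PAcongr (PA := PAtoms P) (X := X ∩ A) (X' := X ∩ A ∩ PAtoms P)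
    (fun g hg => ⟨fun h => ⟨h, hg⟩, fun h => h.1⟩) _ (IFover_reduct _ hover)

lemma AS_transfer (Pi1 Pi2 : Program) (hP : predsOf (Pi1 ∪ Pi2) ⊆ P)
    (hS : ssymsOf (Pi1 ∪ Pi2) ⊆ S)
    (hRHS : ∀ H I : AInterp (sigPS P S), IsAggHT P S H I →
      (htSatTh H I (trProgA P S Sem.cli Pi1) ↔ htSatTh H I (trProgA P S Sem.cli Pi2)))
    (Δ : Program) (A : Set GAtom) (h : gringoAS (Pi1 ∪ Δ) A) : gringoAS (Pi2 ∪ Δ) A := by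
  have EQ : ∀ X : Set GAtom, (∀ R ∈ Pi1, psat X (reduct A (trRuleIF R))) ↔
      (∀ R ∈ Pi2, psat X (reduct A (trRuleIF R))) := by
    intro X
    have hsub : X ∩ A ∩ PAtoms P ⊆ A ∩ PAtoms P := fun g hg => ⟨hg.1.2, hg.2⟩
    have hpair := canon_isAggHT (P := P) (S := S) (B := X ∩ A ∩ PAtoms P)
      (A := A ∩ PAtoms P) hsub
    have h1 : (∀ R ∈ Pi1, psat X (reduct A (trRuleIF R))) ↔
        htSatTh (canonH P S (X ∩ A ∩ PAtoms P) (A ∩ PAtoms P)) (canonI P S (A ∩ PAtoms P))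
          (trProgA P S Sem.cli Pi1) := by
      rw [htSatTh_trProgA]
      exact forall₂_congr fun R hR => psat_red_rule_canon X A R
        (hats_of_hP hP (Or.inl hR)) (ruleok_of_hS hS (Or.inl hR))
    have h2 : (∀ R ∈ Pi2, psat X (reduct A (trRuleIF R))) ↔
        htSatTh (canonH P S (X ∩ A ∩ PAtoms P) (A ∩ PAtoms P)) (canonI P S (A ∩ PAtoms P))
          (trProgA P S Sem.cli Pi2) := by
      rw [htSatTh_trProgA]
      exact forall₂_congr fun R hR => psat_red_rule_canon X A R
        (hats_of_hP hP (Or.inr hR)) (ruleok_of_hS hS (Or.inr hR))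
    rw [h1, h2]
    exact hRHS _ _ hpair
  obtain ⟨hmod, hmin⟩ := h
  constructor
  · rw [psat_red_trProg] at hmod ⊢
    rintro R (hR | hR)
    · exact (EQ A).mp (fun R' hR' => hmod R' (Or.inl hR')) R hR
    · exact hmod R (Or.inr hR)
  · intro X hX hcon
    refine hmin X hX ?_
    rw [psat_red_trProg] at hcon ⊢
    rintro R (hR | hR)
    · exact (EQ X).mpr (fun R' hR' => hcon R' (Or.inl hR')) R hR
    · exact hcon R (Or.inr hR)

/-- The fact `g.` -/
def factR (g : GAtom) : Rule := ⟨some ⟨g.1, g.2.map .ground⟩, []⟩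

/-- The rule `a :- b`. -/
def arrowR (a b : GAtom) : Rule :=
  ⟨some ⟨a.1, a.2.map .ground⟩, [.basic ⟨.zero, .atm ⟨b.1, b.2.map .ground⟩⟩]⟩

lemma trAtomIF_ground (env : ℕ → PTerm) (g : GAtom) :
    trAtomIF env ⟨g.1, g.2.map .ground⟩ = .atom g := by
  rw [trAtomIF]
  show IF.atom (g.1, (g.2.map PrgTerm.ground).map (PrgTerm.toP env)) = _
  rw [List.map_map]
  show IF.atom (g.1, g.2.map (fun t => t)) = _
  rw [List.map_id']

lemma psat_red_factR (X A : Set GAtom) (g : GAtom) (hg : g ∈ A) :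
    psat X (reduct A (trRuleIF (factR g))) ↔ g ∈ X := by
  rw [trRuleIF, red_conj']
  constructor
  · intro h
    have h2 := h (fun _ => PTerm.inf)
    rw [red_impl] at h2
    have h3 := h2.2 (by
      rw [red_conj']
      intro i
      exact Fin.elim0 i)
    rw [show (match (factR g).head with
        | some a => trAtomIF (assign (globalVarsSorted (factR g)) (fun _ => PTerm.inf)
            (fun _ => PTerm.inf)) a
        | none => IF.bot) = IF.atom g from trAtomIF_ground _ g] at h3
    exact ((red_atom X A g).mp h3).2
  · intro hgX z
    rw [red_impl]
    constructor
    · intro _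
      show psat A (match (factR g).head with
        | some a => trAtomIF (assign (globalVarsSorted (factR g)) z (fun _ => PTerm.inf)) a
        | none => IF.bot)
      rw [show (match (factR g).head with
        | some a => trAtomIF (assign (globalVarsSorted (factR g)) z (fun _ => PTerm.inf)) a
        | none => IF.bot) = IF.atom g from trAtomIF_ground _ g]
      exact hg
    · intro _
      rw [show (match (factR g).head with
        | some a => trAtomIF (assign (globalVarsSorted (factR g)) z (fun _ => PTerm.inf)) a
        | none => IF.bot) = IF.atom g from trAtomIF_ground _ g]
      rw [red_atom]
      exact ⟨hg, hgX⟩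

lemma psat_red_arrowR (X A : Set GAtom) (a b : GAtom) (ha : a ∈ A) (hb : b ∈ A) :
    psat X (reduct A (trRuleIF (arrowR a b))) ↔ (b ∈ X → a ∈ X) := by
  rw [trRuleIF, red_conj']
  have hbody : ∀ (env : ℕ → PTerm) (i : Fin (arrowR a b).body.length),
      trLitIF (arrowR a b) env ((arrowR a b).body.get i) = IF.atom b := by
    intro env i
    have hi : (i : ℕ) < 1 := by simpa [arrowR] using i.isLt
    have : i = ⟨0, by simp [arrowR]⟩ := Fin.ext (by simpa using Nat.lt_one_iff.mp hi)
    subst this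
    show trBLitIF env ⟨.zero, .atm ⟨b.1, b.2.map .ground⟩⟩ = IF.atom b
    show trAtomIF env ⟨b.1, b.2.map .ground⟩ = IF.atom b
    exact trAtomIF_ground env b
  have hhead : ∀ env : ℕ → PTerm, (match (arrowR a b).head with
      | some a0 => trAtomIF env a0
      | none => IF.bot) = IF.atom a := fun env => trAtomIF_ground env a
  constructor
  · intro h hbX
    have h2 := h (fun _ => PTerm.inf)
    rw [red_impl] at h2
    have h3 := h2.2 (by
      rw [red_conj']
      intro i
      rw [hbody _ i, red_atom]
      exact ⟨hb, hbX⟩)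
    rw [hhead, red_atom] at h3
    exact h3.2
  · intro hX z
    rw [red_impl]
    constructor
    · intro hA
      rw [hhead]
      exact ha
    · intro hC
      rw [red_conj'] at hC
      have hbX := hC ⟨0, by norm_num [arrowR]⟩
      rw [hbody _ _, red_atom] at hbX
      rw [hhead, red_atom]
      exact ⟨ha, hX hbX.2⟩

lemma AIof_mono {H I : AInterp (sigPS P S)} (hAgg : IsAggHT P S H I) :
    AIof P S H ⊆ AIof P S I := by
  rintro g ⟨h, hpr⟩
  exact ⟨h, hAgg.1.2.1 _ (Set.mem_univ _) _ hpr⟩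

end Main
section Final

variable {P : Set (ℕ × ℕ)} {S : Set SetSymbol}

lemma not_SE (Pi1 Pi2 : Program) (hS : ssymsOf (Pi1 ∪ Pi2) ⊆ S)
    (H I : AInterp (sigPS P S)) (hAgg : IsAggHT P S H I)
    (h1 : htSatTh H I (trProgA P S Sem.cli Pi1))
    (h2 : ¬ htSatTh H I (trProgA P S Sem.cli Pi2)) :
    ¬ ∀ (Δ : Program) (A : Set GAtom), gringoAS (Pi1 ∪ Δ) A ↔ gringoAS (Pi2 ∪ Δ) A := by
  intro hLHS
  set B := AIof P S H with hB
  set A := AIof P S I with hA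
  have hBA : B ⊆ A := AIof_mono hAgg
  have hok1 : ∀ R ∈ Pi1, RuleOk S R := fun R hR => ruleok_of_hS hS (Or.inl hR)
  have hok2 : ∀ R ∈ Pi2, RuleOk S R := fun R hR => ruleok_of_hS hS (Or.inr hR)
  have Q1 : ∀ R ∈ Pi1, psat B (reduct A (trRuleIF R)) :=
    (htSatTh_iff H I hAgg Pi1 hok1).mp h1
  have hQ2 : ¬ ∀ R ∈ Pi2, psat B (reduct A (trRuleIF R)) :=
    fun hq => h2 ((htSatTh_iff H I hAgg Pi2 hok2).mpr hq)
  push_neg at hQ2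
  obtain ⟨R₂, hR₂, hnot⟩ := hQ2
  have C1 : ∀ R ∈ Pi1, psat A (trRuleIF R) := fun R hR => psat_reduct_imp _ _ _ (Q1 R hR)
  by_cases hC2 : ∀ R ∈ Pi2, psat A (trRuleIF R)
  · -- Pi2 is classгорically satisfied: use the two-part context
    have hBne : B ≠ A := by
      intro e
      exact hnot (e ▸ ((psat_reduct_self A _).mpr (hC2 R₂ hR₂)))
    set Δ : Program :=
      {R | (∃ g ∈ B, R = factR g) ∨ ∃ a ∈ A \ B, ∃ b ∈ A \ B, R = arrowR a b} with hΔ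
    have hAS2 : gringoAS (Pi2 ∪ Δ) A := by
      constructor
      · rw [psat_red_trProg]
        rintro R (hR | (⟨g, hg, rfl⟩ | ⟨a, ha, b, hb, rfl⟩))
        · exact (psat_reduct_self A _).mpr (hC2 R hR)
        · exact (psat_red_factR A A g (hBA hg)).mpr (hBA hg)
        · exact (psat_red_arrowR A A a b ha.1 hb.1).mpr (fun _ => ha.1)
      · intro X hX hcon
        rw [psat_red_trProg] at hcon
        have hXA : X ⊆ A := hX.1
        have hBX : B ⊆ X := fun g hg =>
          (psat_red_factR X A g (hBA hg)).mp (hcon _ (Or.inr (Or.inl ⟨g, hg, rfl⟩)))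
        obtain ⟨c, hcA, hcX⟩ := Set.exists_of_ssubset hX
        have hcB : c ∉ B := fun h => hcX (hBX h)
        have hXB : X ⊆ B := by
          intro b hbX
          by_contra hbB
          have hbA : b ∈ A := hXA hbX
          have harrow := (psat_red_arrowR X A c b hcA hbA).mp
            (hcon _ (Or.inr (Or.inr ⟨c, ⟨hcA, hcB⟩, b, ⟨hbA, hbB⟩, rfl⟩)))
          exact hcX (harrow hbX)
        exact hnot ((subset_antisymm hXB hBX) ▸ hcon R₂ (Or.inl hR₂))
    have hAS1 : ¬ gringoAS (Pi1 ∪ Δ) A := by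
      rintro ⟨-, hmin⟩
      refine hmin B (HasSubset.Subset.ssubset_of_ne hBA hBne) ?_
      rw [psat_red_trProg]
      rintro R (hR | (⟨g, hg, rfl⟩ | ⟨a, ha, b, hb, rfl⟩))
      · exact Q1 R hR
      · exact (psat_red_factR B A g (hBA hg)).mpr hg
      · exact (psat_red_arrowR B A a b ha.1 hb.1).mpr (fun hbB => absurd hbB hb.2)
    exact hAS1 ((hLHS Δ A).mpr hAS2)
  · push_neg at hC2
    obtain ⟨R₂', hR₂', hnot2⟩ := hC2
    set Δ : Program := {R | ∃ g ∈ A, R = factR g} with hΔ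
    have hAS1 : gringoAS (Pi1 ∪ Δ) A := by
      constructor
      · rw [psat_red_trProg]
        rintro R (hR | ⟨g, hg, rfl⟩)
        · exact (psat_reduct_self A _).mpr (C1 R hR)
        · exact (psat_red_factR A A g hg).mpr hg
      · intro X hX hcon
        rw [psat_red_trProg] at hcon
        have hAX : A ⊆ X := fun g hg =>
          (psat_red_factR X A g hg).mp (hcon _ (Or.inr ⟨g, hg, rfl⟩))
        exact hX.2 hAX
    have hAS2 : ¬ gringoAS (Pi2 ∪ Δ) A := by
      rintro ⟨hmod, -⟩
      rw [psat_red_trProg] at hmod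
      exact hnot2 ((psat_reduct_self A _).mp (hmod R₂' (Or.inl hR₂')))
    exact hAS2 ((hLHS Δ A).mp hAS1)

end Final

/-- Programs `Π₁` and `Π₂` are strongly equivalent for clingo —
i.e. for every program `Δ`, the programs `Π₁ ∪ Δ` and `Π₂ ∪ Δ` have the same
gringo answer sets — if and only if `τ^cli(Π₁)` and `τ^cli(Π₂)` have the same
agg-ht-models over `σ(𝒫,𝒮)`, where `𝒫` and `𝒮` contain all predicate and set
symbols occurring in `Π₁ ∪ Π₂`. -/
theorem stmt14 (Pi1 Pi2 : Program) (P : Set (ℕ × ℕ)) (S : Set SetSymbol)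
    (hP : predsOf (Pi1 ∪ Pi2) ⊆ P) (hS : ssymsOf (Pi1 ∪ Pi2) ⊆ S) :
    (∀ (Δ : Program) (A : Set GAtom), gringoAS (Pi1 ∪ Δ) A ↔ gringoAS (Pi2 ∪ Δ) A) ↔
    (∀ H I : AInterp (sigPS P S), IsAggHT P S H I →
      (htSatTh H I (trProgA P S Sem.cli Pi1) ↔ htSatTh H I (trProgA P S Sem.cli Pi2))) := by
  constructor
  · intro hLHS H I hAgg
    by_contra hne
    by_cases hA : htSatTh H I (trProgA P S Sem.cli Pi1)
    · have h2 : ¬ htSatTh H I (trProgA P S Sem.cli Pi2) :=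
        fun hQ => hne ⟨fun _ => hQ, fun _ => hA⟩
      exact not_SE Pi1 Pi2 hS H I hAgg hA h2 hLHS
    · by_cases hQ : htSatTh H I (trProgA P S Sem.cli Pi2)
      · have hS' : ssymsOf (Pi2 ∪ Pi1) ⊆ S := by
          rw [Set.union_comm Pi2 Pi1]; exact hS
        exact not_SE Pi2 Pi1 hS' H I hAgg hQ hA (fun Δ A => (hLHS Δ A).symm)
      · exact hne (iff_of_false hA hQ)
  · intro hRHS Δ A
    constructor
    · exact AS_transfer Pi1 Pi2 hP hS hRHS Δ A
    · refine AS_transfer (P := P) (S := S) Pi2 Pi1 ?_ ?_ ?_ Δ A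
      · rw [Set.union_comm Pi2 Pi1]; exact hP
      · rw [Set.union_comm Pi2 Pi1]; exact hS
      · intro H I h
        exact (hRHS H I h).symm
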